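/- arXiv:math/0609744 — 6 statements merged into one kernel-verified Lean document; each statement's English description precedes it below -/
import Mathlib

section
/- Euler's identity: ζ(2,1) = ζ(3), i.e. Σ_{k>l≥1} 1/(k² l) = Σ_{k≥1} 1/k³. -/
open scoped BigOperators

/-- ζ(s) = Σ_{k≥1} 1/k^s. -/
noncomputable def zeta (s : ℕ) : ℝ := ∑' k : ℕ, 1 / ((k : ℝ) + 1) ^ s

/-- ζ(a,b) = Σ_{k>l≥1} 1/(k^a l^b). -/
noncomputable def zeta2 (a b : ℕ) : ℝ :=
  ∑' k : ℕ, (1 / ((k : ℝ) + 2) ^ a) * ∑ l ∈ Finset.range (k + 1), 1 / ((l : ℝ) + 1) ^ b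

open Filter Finset

lemma tendsto_aux (c : ℝ) :
    Tendsto (fun n : ℕ => 1 / ((n : ℝ) + c)) atTop (nhds 0) := by
  simp only [one_div]
  exact Tendsto.inv_tendsto_atTop (tendsto_atTop_add_const_right _ c tendsto_natCast_atTop_atTop)

lemma real_tele (m : ℕ) :
    HasSum (fun n : ℕ => 1 / ((((n:ℝ)+1) * ((n:ℝ)+(m:ℝ)+2))))
      ((1/((m:ℝ)+1)) * ∑ l ∈ Finset.range (m+1), 1/((l:ℝ)+1)) := by
  have hm : (0:ℝ) < (m:ℝ) + 1 := by positivity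
  set F : ℕ → ℝ := fun n => (1/((m:ℝ)+1)) * ∑ j ∈ Finset.range (m+1), 1/((n:ℝ)+(j:ℝ)+1) with hF
  have key : ∀ n : ℕ, F n - F (n+1) = 1 / (((n:ℝ)+1) * ((n:ℝ)+(m:ℝ)+2)) := by
    intro n
    have tele : ∑ j ∈ Finset.range (m+1), (1/((n:ℝ)+(j:ℝ)+1) - 1/((n:ℝ)+((j:ℝ)+1)+1))
        = 1/((n:ℝ)+1) - 1/((n:ℝ)+((m:ℝ)+1)+1) := by
      have := Finset.sum_range_sub' (fun j : ℕ => 1/((n:ℝ)+(j:ℝ)+1)) (m+1)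
      convert this using 2 <;> push_cast <;> ring_nf
    have hFn : F n - F (n+1) = (1/((m:ℝ)+1)) * (1/((n:ℝ)+1) - 1/((n:ℝ)+((m:ℝ)+1)+1)) := by
      rw [← tele, hF]
      simp only [← Finset.mul_sum, ← mul_sub, Finset.sum_sub_distrib]
      congr 1
      congr 1
      · apply Finset.sum_congr rfl; intro j _; push_cast; ring_nf
    rw [hFn]
    have h1 : (0:ℝ) < (n:ℝ) + 1 := by positivity
    have h2 : (0:ℝ) < (n:ℝ) + (m:ℝ) + 2 := by positivity
    have h3 : ((m:ℝ)+1) ≠ 0 := ne_of_gt hm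
    have h4 : ((n:ℝ)+1) ≠ 0 := ne_of_gt h1
    have h5 : ((n:ℝ)+((m:ℝ)+1)+1) ≠ 0 := by positivity
    have h6 : ((n:ℝ)+(m:ℝ)+2) ≠ 0 := ne_of_gt h2
    field_simp
    ring
  have hpos : ∀ n : ℕ, (0:ℝ) ≤ 1 / (((n:ℝ)+1) * ((n:ℝ)+(m:ℝ)+2)) := by
    intro n; positivity
  rw [hasSum_iff_tendsto_nat_of_nonneg hpos]
  have hsum : ∀ N : ℕ, ∑ i ∈ Finset.range N, 1 / (((i:ℝ)+1) * ((i:ℝ)+(m:ℝ)+2)) = F 0 - F N := by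
    intro N
    rw [← Finset.sum_range_sub' F N]
    exact Finset.sum_congr rfl fun i _ => (key i).symm
  simp only [hsum]
  have hF0 : F 0 = (1/((m:ℝ)+1)) * ∑ l ∈ Finset.range (m+1), 1/((l:ℝ)+1) := by
    simp only [hF]; norm_num
  have hFlim : Tendsto F atTop (nhds 0) := by
    rw [hF]
    have : Tendsto (fun n : ℕ => ∑ j ∈ Finset.range (m+1), 1/((n:ℝ)+(j:ℝ)+1)) atTop (nhds 0) := by
      have := tendsto_finset_sum (Finset.range (m+1))
        (fun j _ => tendsto_aux ((j:ℝ)+1))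
      simpa using this.congr (fun n => by apply Finset.sum_congr rfl; intro j _; ring_nf)
    simpa using (this.const_mul (1/((m:ℝ)+1)))
  rw [← hF0]
  simpa using (tendsto_const_nhds.sub hFlim).congr (fun N => rfl)

lemma real_tele0 (c : ℝ) (hc : 0 < c) :
    HasSum (fun n : ℕ => 1/((n:ℝ)+c) - 1/((n:ℝ)+c+1)) (1/c) := by
  have hpos : ∀ n : ℕ, (0:ℝ) ≤ 1/((n:ℝ)+c) - 1/((n:ℝ)+c+1) := by
    intro n
    have h1 : (0:ℝ) < (n:ℝ) + c := by positivity
    have : 1/((n:ℝ)+c+1) ≤ 1/((n:ℝ)+c) := by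
      apply one_div_le_one_div_of_le h1; linarith
    linarith
  rw [hasSum_iff_tendsto_nat_of_nonneg hpos]
  have hsum : ∀ N : ℕ, ∑ i ∈ Finset.range N, (1/((i:ℝ)+c) - 1/((i:ℝ)+c+1))
      = 1/c - 1/((N:ℝ)+c) := by
    intro N
    have h := Finset.sum_range_sub' (fun i : ℕ => 1/((i:ℝ)+c)) N
    norm_num at h
    have e : ∀ i:ℕ, ((i:ℝ)+c+1)⁻¹ = ((i:ℝ)+1+c)⁻¹ := fun i => by ring_nf
    simp only [one_div, Finset.sum_sub_distrib, e, h]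
  simp only [hsum]
  have := (tendsto_const_nhds (x := 1/c) (f := atTop (α := ℕ))).sub (tendsto_aux c)
  simpa using this

open scoped ENNReal

noncomputable def u (k : ℕ) : ℝ≥0∞ := ENNReal.ofReal (1 / ((k:ℝ)+1))

lemma u_toReal (k : ℕ) : (u k).toReal = 1 / ((k:ℝ)+1) :=
  ENNReal.toReal_ofReal (by positivity)

lemma u_ne_top (k : ℕ) : u k ≠ ⊤ := ENNReal.ofReal_ne_top

lemma u_cast (m n : ℕ) : u (m + n + 1) = ENNReal.ofReal (1 / ((m:ℝ)+(n:ℝ)+2)) := by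
  unfold u; congr 2; push_cast; ring

/-- ENNReal telescoping: ∑ₙ 1/((n+1)(n+m+2)) = (1/(m+1)) Hₘ₊₁. -/
lemma tele_E (m : ℕ) :
    ∑' n : ℕ, u n * u (n + m + 1) = u m * ∑ l ∈ Finset.range (m+1), u l := by
  have h := real_tele m
  have hterm : ∀ n : ℕ, u n * u (n + m + 1)
      = ENNReal.ofReal (1 / (((n:ℝ)+1) * ((n:ℝ)+(m:ℝ)+2))) := by
    intro n
    rw [u_cast n m, u, ← ENNReal.ofReal_mul (by positivity)]
    congr 1
    rw [div_mul_div_comm, one_mul]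
  have hnn : ∀ n : ℕ, (0:ℝ) ≤ 1 / (((n:ℝ)+1) * ((n:ℝ)+(m:ℝ)+2)) := fun n => by positivity
  calc ∑' n : ℕ, u n * u (n + m + 1)
      = ∑' n : ℕ, ENNReal.ofReal (1 / (((n:ℝ)+1) * ((n:ℝ)+(m:ℝ)+2))) := by
        exact tsum_congr hterm
    _ = ENNReal.ofReal (∑' n : ℕ, 1 / (((n:ℝ)+1) * ((n:ℝ)+(m:ℝ)+2))) :=
        (ENNReal.ofReal_tsum_of_nonneg hnn h.summable).symm
    _ = ENNReal.ofReal ((1/((m:ℝ)+1)) * ∑ l ∈ Finset.range (m+1), 1/((l:ℝ)+1)) := by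
        rw [h.tsum_eq]
    _ = u m * ∑ l ∈ Finset.range (m+1), u l := by
        rw [ENNReal.ofReal_mul (by positivity),
          ENNReal.ofReal_sum_of_nonneg (fun i _ => by positivity)]
        rfl

/-- Tail bound: ∑ₙ 1/(m+n+2)² ≤ 1/(m+1). -/
lemma tail_E (m : ℕ) : ∑' n : ℕ, u (m + n + 1) ^ 2 ≤ u m := by
  set f : ℕ → ℝ := fun n => (1 / ((n:ℝ)+(m:ℝ)+2)) ^ 2 with hf
  set g : ℕ → ℝ := fun n => 1/((n:ℝ)+((m:ℝ)+1)) - 1/((n:ℝ)+((m:ℝ)+1)+1) with hg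
  have hgsum : HasSum g (1/((m:ℝ)+1)) := real_tele0 ((m:ℝ)+1) (by positivity)
  have hle : ∀ n : ℕ, f n ≤ g n := by
    intro n
    have h1 : (0:ℝ) < (n:ℝ)+(m:ℝ)+1 := by positivity
    have h2 : (0:ℝ) < (n:ℝ)+(m:ℝ)+2 := by positivity
    have hgn : g n = 1 / (((n:ℝ)+(m:ℝ)+1) * ((n:ℝ)+(m:ℝ)+2)) := by
      rw [hg]; field_simp; ring
    rw [hgn, hf]
    have : (1:ℝ) / ((n:ℝ)+(m:ℝ)+2)^2 ≤ 1 / (((n:ℝ)+(m:ℝ)+1) * ((n:ℝ)+(m:ℝ)+2)) := by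
      apply one_div_le_one_div_of_le (by positivity)
      nlinarith
    calc (1 / ((n:ℝ)+(m:ℝ)+2)) ^ 2 = 1 / ((n:ℝ)+(m:ℝ)+2)^2 := by
          rw [div_pow, one_pow]
      _ ≤ _ := this
  have hfnn : ∀ n, (0:ℝ) ≤ f n := fun n => by positivity
  have hfs : Summable f := Summable.of_nonneg_of_le hfnn hle hgsum.summable
  have hterm : ∀ n : ℕ, u (m + n + 1) ^ 2 = ENNReal.ofReal (f n) := by
    intro n
    rw [u_cast m n, ← ENNReal.ofReal_pow (by positivity), hf]
    congr 2
    ring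
  calc ∑' n : ℕ, u (m + n + 1) ^ 2 = ∑' n : ℕ, ENNReal.ofReal (f n) := tsum_congr hterm
    _ = ENNReal.ofReal (∑' n, f n) := (ENNReal.ofReal_tsum_of_nonneg hfnn hfs).symm
    _ ≤ ENNReal.ofReal (1/((m:ℝ)+1)) := by
        apply ENNReal.ofReal_le_ofReal
        calc ∑' n, f n ≤ ∑' n, g n := Summable.tsum_le_tsum hle hfs hgsum.summable
          _ = 1/((m:ℝ)+1) := hgsum.tsum_eq
    _ = u m := rfl

noncomputable def zE2 : ℝ≥0∞ := ∑' k : ℕ, u (k+1) ^ 2 * ∑ l ∈ Finset.range (k+1), u l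
noncomputable def zE3 : ℝ≥0∞ := ∑' k : ℕ, u k ^ 3

/-- W = ζ(2,1) + ζ(3) (adding the diagonal). -/
lemma W_eq : ∑' m : ℕ, u m ^ 2 * ∑ l ∈ Finset.range (m+1), u l = zE2 + zE3 := by
  have hterm : ∀ m : ℕ, u m ^ 2 * ∑ l ∈ Finset.range (m+1), u l
      = u m ^ 2 * ∑ l ∈ Finset.range m, u l + u m ^ 3 := by
    intro m
    rw [Finset.sum_range_succ, mul_add, ← pow_succ]
  rw [tsum_congr hterm, ENNReal.tsum_add]
  congr 1
  rw [tsum_eq_zero_add' ENNReal.summable]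
  simp [zE2]

/-- partial fractions: 1/(MN(M+N)) = 1/(M(M+N)²) + 1/(N(M+N)²). -/
lemma pf (m n : ℕ) : u m * u n * u (m+n+1)
    = u m * u (m+n+1) ^ 2 + u n * u (m+n+1) ^ 2 := by
  have hmn : u (m+n+1) = ENNReal.ofReal (1/((m:ℝ)+(n:ℝ)+2)) := u_cast m n
  have hnm : u (n+m+1) = ENNReal.ofReal (1/((n:ℝ)+(m:ℝ)+2)) := u_cast n m
  rw [hmn, u, u, ← ENNReal.ofReal_pow (by positivity),
    ← ENNReal.ofReal_mul (by positivity), ← ENNReal.ofReal_mul (by positivity),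
    ← ENNReal.ofReal_mul (by positivity), ← ENNReal.ofReal_mul (by positivity),
    ← ENNReal.ofReal_add (by positivity) (by positivity)]
  congr 1
  have h1 : ((m:ℝ)+1) ≠ 0 := by positivity
  have h2 : ((n:ℝ)+1) ≠ 0 := by positivity
  have h3 : ((m:ℝ)+(n:ℝ)+2) ≠ 0 := by positivity
  field_simp
  ring

/-- X = ζ(2,1) (Fubini over the triangle). -/
lemma X_eq : ∑' m : ℕ, u m * ∑' n : ℕ, u (m + n + 1) ^ 2 = zE2 := by
  have step1 : zE2 = ∑' k : ℕ, ∑' l : ℕ, (if l ≤ k then u (k+1) ^ 2 * u l else 0) := by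
    unfold zE2
    apply tsum_congr; intro k
    rw [Finset.mul_sum]
    rw [tsum_eq_sum (s := Finset.range (k+1))
      (fun l hl => by rw [if_neg (by simpa using hl)])]
    apply Finset.sum_congr rfl
    intro l hl
    rw [if_pos (by simpa [Nat.lt_succ_iff] using hl)]
  rw [step1, ENNReal.tsum_comm]
  apply tsum_congr; intro l
  have step2 : ∑' k : ℕ, (if l ≤ k then u (k+1) ^ 2 * u l else 0)
      = ∑' n : ℕ, u (l + n + 1) ^ 2 * u l := by
    rw [← Summable.sum_add_tsum_nat_add' (k := l) (f := fun k => if l ≤ k then u (k+1) ^ 2 * u l else 0)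
      ENNReal.summable]
    have hz : ∑ i ∈ Finset.range l, (if l ≤ i then u (i+1) ^ 2 * u l else 0) = 0 := by
      apply Finset.sum_eq_zero; intro i hi
      rw [if_neg (by simpa using Nat.not_le.mpr (Finset.mem_range.mp hi))]
    rw [hz, zero_add]
    apply tsum_congr; intro n
    rw [if_pos (Nat.le_add_left l n), Nat.add_comm n l]
  rw [step2]
  rw [← ENNReal.tsum_mul_left]
  apply tsum_congr; intro n
  ring

/-- D = 2 ζ(2,1). -/
lemma D_eq : ∑' m : ℕ, ∑' n : ℕ, u m * u n * u (m+n+1) = zE2 + zE2 := by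
  have h1 : ∑' m : ℕ, ∑' n : ℕ, u m * u n * u (m+n+1)
      = ∑' m : ℕ, ∑' n : ℕ, (u m * u (m+n+1) ^ 2 + u n * u (m+n+1) ^ 2) :=
    tsum_congr fun m => tsum_congr fun n => pf m n
  rw [h1]
  have h2 : ∀ m : ℕ, ∑' n : ℕ, (u m * u (m+n+1) ^ 2 + u n * u (m+n+1) ^ 2)
      = (∑' n : ℕ, u m * u (m+n+1) ^ 2) + ∑' n : ℕ, u n * u (m+n+1) ^ 2 :=
    fun m => ENNReal.tsum_add
  rw [tsum_congr h2, ENNReal.tsum_add]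
  congr 1
  · rw [← X_eq]
    apply tsum_congr; intro m
    rw [ENNReal.tsum_mul_left]
  · rw [ENNReal.tsum_comm, ← X_eq]
    apply tsum_congr; intro n
    rw [ENNReal.tsum_mul_left]
    congr 1
    apply tsum_congr; intro m
    rw [Nat.add_comm m n]

/-- D = W via the telescoping evaluation of the inner sum. -/
lemma D_eq_W : ∑' m : ℕ, ∑' n : ℕ, u m * u n * u (m+n+1)
    = ∑' m : ℕ, u m ^ 2 * ∑ l ∈ Finset.range (m+1), u l := by
  apply tsum_congr; intro m
  have h : ∀ n : ℕ, u m * u n * u (m+n+1) = u m * (u n * u (n + m + 1)) := by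
    intro n
    rw [mul_assoc]
    congr 3
    omega
  rw [tsum_congr h, ENNReal.tsum_mul_left, tele_E, ← mul_assoc, ← sq]

lemma zE2_ne_top : zE2 ≠ ⊤ := by
  have h1 : zE2 ≤ ∑' m : ℕ, u m * u m := by
    rw [← X_eq]
    apply ENNReal.tsum_le_tsum
    intro m
    exact mul_le_mul_right (tail_E m) (u m)
  have h2 : ∑' m : ℕ, u m * u m ≠ ⊤ := by
    rw [tsum_eq_zero_add' ENNReal.summable]
    have h3 : ∑' n : ℕ, u (n+1) * u (n+1) ≤ u 0 := by
      calc ∑' n : ℕ, u (n+1) * u (n+1) = ∑' n : ℕ, u (0 + n + 1) ^ 2 := by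
            apply tsum_congr; intro n; rw [sq]; congr 2 <;> omega
        _ ≤ u 0 := tail_E 0
    exact ENNReal.add_ne_top.mpr ⟨ENNReal.mul_ne_top (u_ne_top 0) (u_ne_top 0),
      ne_top_of_le_ne_top (u_ne_top 0) h3⟩
  exact ne_top_of_le_ne_top h2 h1

lemma main_E : zE3 = zE2 := by
  have h : zE2 + zE3 = zE2 + zE2 := by
    rw [← W_eq, ← D_eq_W, D_eq]
  exact (ENNReal.add_right_inj zE2_ne_top).mp h

/-- Euler's identity ζ(2,1) = ζ(3). -/
theorem euler_zeta_two_one : zeta2 2 1 = zeta 3 := by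
  have h2 : zeta2 2 1 = zE2.toReal := by
    unfold zeta2 zE2
    rw [ENNReal.tsum_toReal_eq (fun k => ENNReal.mul_ne_top (ENNReal.pow_ne_top (u_ne_top _))
      (ENNReal.sum_ne_top.mpr fun l _ => u_ne_top l))]
    apply tsum_congr; intro k
    rw [ENNReal.toReal_mul, ENNReal.toReal_pow, u_toReal,
      ENNReal.toReal_sum (fun l _ => u_ne_top l)]
    congr 1
    · rw [div_pow, one_pow]
      congr 2
      push_cast
      ring
    · apply Finset.sum_congr rfl; intro l _
      rw [u_toReal, pow_one]
  have h3 : zeta 3 = zE3.toReal := by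
    unfold zeta zE3
    rw [ENNReal.tsum_toReal_eq (fun k => ENNReal.pow_ne_top (u_ne_top _))]
    apply tsum_congr; intro k
    rw [ENNReal.toReal_pow, u_toReal, div_pow, one_pow]
  rw [h2, h3, main_E]
end

section
/- Σ_{k₁≥k₂≥k₃≥1} (k₁+1/2)(k₂+1/2)(k₃+1/2) · (k₁−k₂)(k₂−k₃)(k₁−k₃)(k₁+k₂+1)(k₁+k₃+1)(k₂+k₃+1) / ((k₁)₂^4 (k₂)₂^4 (k₃)₂^4) = −1/4 − ζ(3) + (1/4) ζ(5) + ζ(3)² − (1/4) ζ(7). -/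
open scoped BigOperators
open Filter Topology

/-- Pochhammer symbol (x)_m = x(x+1)⋯(x+m−1). -/
noncomputable def poch (x : ℝ) (m : ℕ) : ℝ := ∏ i ∈ Finset.range m, (x + i)




/-- Tail of ζ(j): `Zt j n = Σ_{k≥0} 1/(k+n)^j`. -/
noncomputable def Zt (j n : ℕ) : ℝ := ∑' k : ℕ, 1 / ((k : ℝ) + n) ^ j

lemma summable_zt {j : ℕ} (hj : 1 < j) (n : ℕ) :
    Summable (fun k : ℕ => 1 / ((k : ℝ) + n) ^ j) := by
  have h0 : Summable (fun k : ℕ => 1 / (k : ℝ) ^ j) :=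
    Real.summable_one_div_nat_pow.2 hj
  have h1 := (summable_nat_add_iff (f := fun k : ℕ => 1 / (k : ℝ) ^ j) n).2 h0
  refine h1.congr fun k => ?_
  push_cast
  ring_nf

lemma zt_shift {j : ℕ} (hj : 1 < j) (n : ℕ) :
    Zt j n = 1 / (n : ℝ) ^ j + Zt j (n + 1) := by
  rw [Zt, Summable.tsum_eq_zero_add (summable_zt hj n)]
  congr 1
  · norm_num
  · rw [Zt]
    refine tsum_congr fun k => ?_
    push_cast
    ring_nf

lemma zt_tendsto {j : ℕ} (hj : 1 < j) : Tendsto (fun n => Zt j n) atTop (𝓝 0) := by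
  have h := tendsto_sum_nat_add (fun k : ℕ => 1 / (k : ℝ) ^ j)
  refine h.congr fun n => ?_
  rw [Zt]
  refine tsum_congr fun k => ?_
  push_cast
  ring_nf

/-- Telescoping sum of nonnegative terms. -/
lemma hasSum_telescope_of_nonneg {g Φ : ℕ → ℝ} (hdiff : ∀ i, g i = Φ i - Φ (i + 1))
    (hg : ∀ i, 0 ≤ g i) (hΦ : Tendsto Φ atTop (𝓝 0)) : HasSum g (Φ 0) := by
  have hpart : ∀ N, ∑ i ∈ Finset.range N, g i = Φ 0 - Φ N := by
    intro N
    induction N with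
    | zero => simp
    | succ n ih => rw [Finset.sum_range_succ, ih, hdiff]; ring
  have htend : Tendsto (fun N => ∑ i ∈ Finset.range N, g i) atTop (𝓝 (Φ 0)) := by
    simp only [hpart]
    simpa using tendsto_const_nhds.sub hΦ
  have hmono : Monotone fun N => ∑ i ∈ Finset.range N, g i := by
    refine monotone_nat_of_le_succ fun n => ?_
    rw [Finset.sum_range_succ]
    linarith [hg n]
  have hs : Summable g :=
    summable_of_sum_range_le hg fun N => hmono.ge_of_tendsto htend N
  exact (hs.hasSum_iff_tendsto_nat).2 htend




noncomputable def P1 (a b u z : ℝ) : ℝ :=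
  u ^ 2 - (a + b) * (2 * z - u ^ 3 - u ^ 2) + a * b * (u ^ 4 + 2 * u ^ 3 + 2 * u ^ 2 - 4 * z)

noncomputable def P2e (P u a3 a5 a7 : ℝ) : ℝ :=
  -(P * (2 * P + 1) * u ^ 4 + (2 * P + 1) ^ 2 * (u ^ 3 + u ^ 2)) +
    (2 * P ^ 2 * u ^ 4 - 2 * (2 * P + 1) * u ^ 2 + 2 * (2 * P + 1) ^ 2) * a3 +
    2 * (2 * P + 1) * a5 - 2 * P ^ 2 * a7

noncomputable def P3e (u a3 a5 a7 : ℝ) : ℝ :=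
  a3 ^ 2 - a3 * u ^ 3 + a5 * u ^ 4 / 4 - a7 * u ^ 2 / 4 - u ^ 4 / 4

lemma key1 (x a b z : ℝ) (hx : x ≠ 0) (hx1 : x + 1 ≠ 0) :
    (2 * x + 1) * (x * (x + 1) - a) * (x * (x + 1) - b) / (x * (x + 1)) ^ 4 =
      P1 a b (1 / x) (1 / x ^ 3 + z) - P1 a b (1 / (x + 1)) z := by
  unfold P1
  field_simp
  ring

lemma key2 (x P z3 z5 z7 : ℝ) (hx : x ≠ 0) (hx1 : x + 1 ≠ 0) :
    (2 * x + 1) * (x * (x + 1) - P) / (x * (x + 1)) ^ 4 *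
      P1 (x * (x + 1)) P (1 / x) (1 / x ^ 3 + z3) =
      P2e P (1 / x) (1 / x ^ 3 + z3) (1 / x ^ 5 + z5) (1 / x ^ 7 + z7) -
        P2e P (1 / (x + 1)) z3 z5 z7 := by
  unfold P1 P2e
  field_simp
  ring

lemma key3 (x z3 z5 z7 : ℝ) (hx : x ≠ 0) (hx1 : x + 1 ≠ 0) :
    (2 * x + 1) / (8 * (x * (x + 1)) ^ 4) *
      P2e (x * (x + 1)) (1 / x) (1 / x ^ 3 + z3) (1 / x ^ 5 + z5) (1 / x ^ 7 + z7) =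
      P3e (1 / x) (1 / x ^ 3 + z3) (1 / x ^ 5 + z5) (1 / x ^ 7 + z7) -
        P3e (1 / (x + 1)) z3 z5 z7 := by
  unfold P2e P3e
  field_simp
  ring




noncomputable def pp (k : ℕ) : ℝ := (k : ℝ) * ((k : ℝ) + 1)

lemma pp_mono {a b : ℕ} (h : a ≤ b) : pp a ≤ pp b := by
  have : (a : ℝ) ≤ (b : ℝ) := Nat.cast_le.2 h
  have ha : (0 : ℝ) ≤ a := Nat.cast_nonneg a
  unfold pp; nlinarith

lemma pp_pos {k : ℕ} (hk : 1 ≤ k) : 0 < pp k := by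
  have : (1 : ℝ) ≤ (k : ℝ) := by exact_mod_cast hk
  unfold pp; nlinarith

/-- nonnegativity of the innermost term -/
lemma g1_nonneg (m2 n : ℕ) {k : ℕ} (h1 : n ≤ k) (h2 : m2 ≤ k) (hk : 1 ≤ k) :
    0 ≤ (2 * (k : ℝ) + 1) * (pp k - pp m2) * (pp k - pp n) / pp k ^ 4 := by
  have h3 : (0:ℝ) ≤ 2 * (k : ℝ) + 1 := by positivity
  have h4 : (0:ℝ) ≤ pp k - pp m2 := sub_nonneg.2 (pp_mono h2)
  have h5 : (0:ℝ) ≤ pp k - pp n := sub_nonneg.2 (pp_mono h1)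
  have h6 : (0:ℝ) < pp k ^ 4 := by
    have := pp_pos hk; positivity
  positivity

lemma L1 (m2 n m : ℕ) (hn : 1 ≤ n) (h1 : n ≤ m2) (h2 : m2 ≤ m) :
    HasSum
      (fun i : ℕ =>
        (2 * ((m + i : ℕ) : ℝ) + 1) * (pp (m + i) - pp m2) * (pp (m + i) - pp n) /
          pp (m + i) ^ 4)
      (P1 (pp m2) (pp n) (1 / (m : ℝ)) (Zt 3 m)) := by
  have hm : 1 ≤ m := le_trans (le_trans hn h1) h2
  have hdiff : ∀ i : ℕ,
      (2 * ((m + i : ℕ) : ℝ) + 1) * (pp (m + i) - pp m2) * (pp (m + i) - pp n) /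
          pp (m + i) ^ 4 =
        (fun i : ℕ => P1 (pp m2) (pp n) (1 / ((m + i : ℕ) : ℝ)) (Zt 3 (m + i))) i -
        (fun i : ℕ => P1 (pp m2) (pp n) (1 / ((m + i : ℕ) : ℝ)) (Zt 3 (m + i))) (i + 1) := by
    intro i
    have hk : 1 ≤ m + i := le_trans hm (Nat.le_add_right m i)
    have hx : ((m + i : ℕ) : ℝ) ≠ 0 := by
      have : (0:ℕ) < m + i := hk
      exact_mod_cast this.ne'
    have hx1 : ((m + i : ℕ) : ℝ) + 1 ≠ 0 := by positivity
    have hidx : m + (i + 1) = (m + i) + 1 := rfl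
    have hcast : ((m + i + 1 : ℕ) : ℝ) = ((m + i : ℕ) : ℝ) + 1 := by push_cast; ring
    simp only [hidx, hcast]
    rw [zt_shift (by norm_num) (m + i)]
    have h := key1 ((m + i : ℕ) : ℝ) (pp m2) (pp n) (Zt 3 (m + i + 1)) hx hx1
    simpa [pp] using h
  have hg : ∀ i : ℕ, 0 ≤
      (2 * ((m + i : ℕ) : ℝ) + 1) * (pp (m + i) - pp m2) * (pp (m + i) - pp n) /
        pp (m + i) ^ 4 := fun i =>
    g1_nonneg m2 n (le_trans (le_trans h1 h2) (Nat.le_add_right m i))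
      (le_trans h2 (Nat.le_add_right m i)) (le_trans hm (Nat.le_add_right m i))
  have hnat : Tendsto (fun i : ℕ => m + i) atTop atTop :=
    tendsto_atTop_mono (fun i => Nat.le_add_left i m) tendsto_id
  have hcastT : Tendsto (fun i : ℕ => ((m + i : ℕ) : ℝ)) atTop atTop :=
    tendsto_natCast_atTop_atTop.comp hnat
  have hu : Tendsto (fun i : ℕ => 1 / ((m + i : ℕ) : ℝ)) atTop (𝓝 0) := by
    simpa [one_div, Function.comp_def] using tendsto_inv_atTop_zero.comp hcastT
  have hz : Tendsto (fun i : ℕ => Zt 3 (m + i)) atTop (𝓝 0) :=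
    (zt_tendsto (by norm_num)).comp hnat
  have hcont : Continuous fun p : ℝ × ℝ => P1 (pp m2) (pp n) p.1 p.2 := by
    unfold P1; fun_prop
  have hΦ : Tendsto (fun i : ℕ => P1 (pp m2) (pp n) (1 / ((m + i : ℕ) : ℝ)) (Zt 3 (m + i)))
      atTop (𝓝 0) := by
    have := (hcont.tendsto ((0 : ℝ), (0 : ℝ))).comp (hu.prodMk_nhds hz)
    have h0 : P1 (pp m2) (pp n) 0 0 = 0 := by simp [P1]
    simpa [h0, Function.comp_def] using this
  simpa using hasSum_telescope_of_nonneg hdiff hg hΦ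

lemma P1val_nonneg (n k : ℕ) (hn : 1 ≤ n) (h1 : n ≤ k) :
    0 ≤ P1 (pp k) (pp n) (1 / (k : ℝ)) (Zt 3 k) :=
  (L1 k n k hn h1 le_rfl).nonneg fun i =>
    g1_nonneg k n (le_trans h1 (Nat.le_add_right k i)) (Nat.le_add_right k i)
      (le_trans (le_trans hn h1) (Nat.le_add_right k i))

lemma g2_nonneg (n k : ℕ) (hn : 1 ≤ n) (h1 : n ≤ k) :
    0 ≤ (2 * (k : ℝ) + 1) * (pp k - pp n) / pp k ^ 4 *
        P1 (pp k) (pp n) (1 / (k : ℝ)) (Zt 3 k) := by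
  have hk : 1 ≤ k := le_trans hn h1
  have h3 : (0:ℝ) ≤ 2 * (k : ℝ) + 1 := by positivity
  have h5 : (0:ℝ) ≤ pp k - pp n := sub_nonneg.2 (pp_mono h1)
  have h6 : (0:ℝ) < pp k ^ 4 := by have := pp_pos hk; positivity
  have h7 := P1val_nonneg n k hn h1
  positivity

lemma L2 (n : ℕ) (hn : 1 ≤ n) :
    HasSum
      (fun i : ℕ =>
        (2 * ((n + i : ℕ) : ℝ) + 1) * (pp (n + i) - pp n) / pp (n + i) ^ 4 *
          P1 (pp (n + i)) (pp n) (1 / ((n + i : ℕ) : ℝ)) (Zt 3 (n + i)))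
      (P2e (pp n) (1 / (n : ℝ)) (Zt 3 n) (Zt 5 n) (Zt 7 n)) := by
  have hdiff : ∀ i : ℕ,
      (2 * ((n + i : ℕ) : ℝ) + 1) * (pp (n + i) - pp n) / pp (n + i) ^ 4 *
          P1 (pp (n + i)) (pp n) (1 / ((n + i : ℕ) : ℝ)) (Zt 3 (n + i)) =
        (fun i : ℕ => P2e (pp n) (1 / ((n + i : ℕ) : ℝ)) (Zt 3 (n + i)) (Zt 5 (n + i))
          (Zt 7 (n + i))) i -
        (fun i : ℕ => P2e (pp n) (1 / ((n + i : ℕ) : ℝ)) (Zt 3 (n + i)) (Zt 5 (n + i))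
          (Zt 7 (n + i))) (i + 1) := by
    intro i
    have hk : 1 ≤ n + i := le_trans hn (Nat.le_add_right n i)
    have hx : ((n + i : ℕ) : ℝ) ≠ 0 := by
      have : (0:ℕ) < n + i := hk
      exact_mod_cast this.ne'
    have hx1 : ((n + i : ℕ) : ℝ) + 1 ≠ 0 := by positivity
    have hidx : n + (i + 1) = (n + i) + 1 := rfl
    have hcast : ((n + i + 1 : ℕ) : ℝ) = ((n + i : ℕ) : ℝ) + 1 := by push_cast; ring
    simp only [hidx, hcast]
    rw [zt_shift (by norm_num : (1:ℕ) < 3) (n + i),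
      zt_shift (by norm_num : (1:ℕ) < 5) (n + i),
      zt_shift (by norm_num : (1:ℕ) < 7) (n + i)]
    have h := key2 ((n + i : ℕ) : ℝ) (pp n) (Zt 3 (n + i + 1)) (Zt 5 (n + i + 1))
      (Zt 7 (n + i + 1)) hx hx1
    simpa [pp] using h
  have hg : ∀ i : ℕ, 0 ≤
      (2 * ((n + i : ℕ) : ℝ) + 1) * (pp (n + i) - pp n) / pp (n + i) ^ 4 *
        P1 (pp (n + i)) (pp n) (1 / ((n + i : ℕ) : ℝ)) (Zt 3 (n + i)) := fun i =>
    g2_nonneg n (n + i) hn (Nat.le_add_right n i)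
  have hnat : Tendsto (fun i : ℕ => n + i) atTop atTop :=
    tendsto_atTop_mono (fun i => Nat.le_add_left i n) tendsto_id
  have hcastT : Tendsto (fun i : ℕ => ((n + i : ℕ) : ℝ)) atTop atTop :=
    tendsto_natCast_atTop_atTop.comp hnat
  have hu : Tendsto (fun i : ℕ => 1 / ((n + i : ℕ) : ℝ)) atTop (𝓝 0) := by
    simpa [one_div, Function.comp_def] using tendsto_inv_atTop_zero.comp hcastT
  have hz3 : Tendsto (fun i : ℕ => Zt 3 (n + i)) atTop (𝓝 0) :=
    (zt_tendsto (by norm_num)).comp hnat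
  have hz5 : Tendsto (fun i : ℕ => Zt 5 (n + i)) atTop (𝓝 0) :=
    (zt_tendsto (by norm_num)).comp hnat
  have hz7 : Tendsto (fun i : ℕ => Zt 7 (n + i)) atTop (𝓝 0) :=
    (zt_tendsto (by norm_num)).comp hnat
  have hcont : Continuous fun p : ℝ × ℝ × ℝ × ℝ => P2e (pp n) p.1 p.2.1 p.2.2.1 p.2.2.2 := by
    unfold P2e; fun_prop
  have hΦ : Tendsto
      (fun i : ℕ => P2e (pp n) (1 / ((n + i : ℕ) : ℝ)) (Zt 3 (n + i)) (Zt 5 (n + i))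
        (Zt 7 (n + i))) atTop (𝓝 0) := by
    have := (hcont.tendsto ((0 : ℝ), (0 : ℝ), (0 : ℝ), (0 : ℝ))).comp
      (hu.prodMk_nhds (hz3.prodMk_nhds (hz5.prodMk_nhds hz7)))
    have h0 : P2e (pp n) 0 0 0 0 = 0 := by simp [P2e]
    simpa [h0, Function.comp_def] using this
  simpa using hasSum_telescope_of_nonneg hdiff hg hΦ

lemma P2val_nonneg (n : ℕ) (hn : 1 ≤ n) :
    0 ≤ P2e (pp n) (1 / (n : ℝ)) (Zt 3 n) (Zt 5 n) (Zt 7 n) :=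
  (L2 n hn).nonneg fun i => g2_nonneg n (n + i) hn (Nat.le_add_right n i)

lemma L3 :
    HasSum
      (fun c : ℕ =>
        (2 * ((c + 1 : ℕ) : ℝ) + 1) / (8 * pp (c + 1) ^ 4) *
          P2e (pp (c + 1)) (1 / ((c + 1 : ℕ) : ℝ)) (Zt 3 (c + 1)) (Zt 5 (c + 1))
            (Zt 7 (c + 1)))
      (P3e 1 (Zt 3 1) (Zt 5 1) (Zt 7 1)) := by
  have hdiff : ∀ c : ℕ,
      (2 * ((c + 1 : ℕ) : ℝ) + 1) / (8 * pp (c + 1) ^ 4) *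
          P2e (pp (c + 1)) (1 / ((c + 1 : ℕ) : ℝ)) (Zt 3 (c + 1)) (Zt 5 (c + 1))
            (Zt 7 (c + 1)) =
        (fun c : ℕ => P3e (1 / ((c + 1 : ℕ) : ℝ)) (Zt 3 (c + 1)) (Zt 5 (c + 1))
          (Zt 7 (c + 1))) c -
        (fun c : ℕ => P3e (1 / ((c + 1 : ℕ) : ℝ)) (Zt 3 (c + 1)) (Zt 5 (c + 1))
          (Zt 7 (c + 1))) (c + 1) := by
    intro c
    have hx : ((c + 1 : ℕ) : ℝ) ≠ 0 := by positivity
    have hx1 : ((c + 1 : ℕ) : ℝ) + 1 ≠ 0 := by positivity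
    have hcast : ((c + 1 + 1 : ℕ) : ℝ) = ((c + 1 : ℕ) : ℝ) + 1 := by push_cast; ring
    simp only [hcast]
    rw [zt_shift (by norm_num : (1:ℕ) < 3) (c + 1),
      zt_shift (by norm_num : (1:ℕ) < 5) (c + 1),
      zt_shift (by norm_num : (1:ℕ) < 7) (c + 1)]
    have h := key3 ((c + 1 : ℕ) : ℝ) (Zt 3 (c + 1 + 1)) (Zt 5 (c + 1 + 1))
      (Zt 7 (c + 1 + 1)) hx hx1
    simpa [pp] using h
  have hg : ∀ c : ℕ, 0 ≤
      (2 * ((c + 1 : ℕ) : ℝ) + 1) / (8 * pp (c + 1) ^ 4) *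
        P2e (pp (c + 1)) (1 / ((c + 1 : ℕ) : ℝ)) (Zt 3 (c + 1)) (Zt 5 (c + 1))
          (Zt 7 (c + 1)) := by
    intro c
    have h3 : (0:ℝ) ≤ 2 * ((c + 1 : ℕ) : ℝ) + 1 := by positivity
    have h6 : (0:ℝ) < pp (c + 1) ^ 4 := by
      have := pp_pos (le_refl 1 |>.trans (Nat.le_add_left 1 c)); positivity
    have h7 := P2val_nonneg (c + 1) (Nat.le_add_left 1 c)
    positivity
  have hnat : Tendsto (fun c : ℕ => c + 1) atTop atTop := tendsto_add_atTop_nat 1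
  have hcastT : Tendsto (fun c : ℕ => ((c + 1 : ℕ) : ℝ)) atTop atTop :=
    tendsto_natCast_atTop_atTop.comp hnat
  have hu : Tendsto (fun c : ℕ => 1 / ((c + 1 : ℕ) : ℝ)) atTop (𝓝 0) := by
    simpa [one_div, Function.comp_def] using tendsto_inv_atTop_zero.comp hcastT
  have hz3 : Tendsto (fun c : ℕ => Zt 3 (c + 1)) atTop (𝓝 0) :=
    (zt_tendsto (by norm_num)).comp hnat
  have hz5 : Tendsto (fun c : ℕ => Zt 5 (c + 1)) atTop (𝓝 0) :=
    (zt_tendsto (by norm_num)).comp hnat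
  have hz7 : Tendsto (fun c : ℕ => Zt 7 (c + 1)) atTop (𝓝 0) :=
    (zt_tendsto (by norm_num)).comp hnat
  have hcont : Continuous fun p : ℝ × ℝ × ℝ × ℝ => P3e p.1 p.2.1 p.2.2.1 p.2.2.2 := by
    unfold P3e; fun_prop
  have hΦ : Tendsto
      (fun c : ℕ => P3e (1 / ((c + 1 : ℕ) : ℝ)) (Zt 3 (c + 1)) (Zt 5 (c + 1)) (Zt 7 (c + 1)))
      atTop (𝓝 0) := by
    have := (hcont.tendsto ((0 : ℝ), (0 : ℝ), (0 : ℝ), (0 : ℝ))).comp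
      (hu.prodMk_nhds (hz3.prodMk_nhds (hz5.prodMk_nhds hz7)))
    have h0 : P3e 0 0 0 0 = 0 := by simp [P3e]
    simpa [h0, Function.comp_def] using this
  have := hasSum_telescope_of_nonneg hdiff hg hΦ
  simpa using this



noncomputable def BB (c : ℕ) : ℝ := (2 * ((c + 1 : ℕ) : ℝ) + 1) / (8 * pp (c + 1) ^ 4)
noncomputable def AA (b c : ℕ) : ℝ :=
  (2 * ((b + c + 1 : ℕ) : ℝ) + 1) * (pp (b + c + 1) - pp (c + 1)) / pp (b + c + 1) ^ 4
noncomputable def FF (q : ℕ × ℕ × ℕ) : ℝ :=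
  BB q.2.2 * AA q.2.1 q.2.2 *
    ((2 * ((q.2.1 + q.2.2 + 1 + q.1 : ℕ) : ℝ) + 1) *
        (pp (q.2.1 + q.2.2 + 1 + q.1) - pp (q.2.1 + q.2.2 + 1)) *
        (pp (q.2.1 + q.2.2 + 1 + q.1) - pp (q.2.2 + 1)) / pp (q.2.1 + q.2.2 + 1 + q.1) ^ 4)
noncomputable def W (c b : ℕ) : ℝ :=
  BB c * AA b c *
    P1 (pp (b + c + 1)) (pp (c + 1)) (1 / ((b + c + 1 : ℕ) : ℝ)) (Zt 3 (b + c + 1))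
noncomputable def G (c : ℕ) : ℝ :=
  BB c * P2e (pp (c + 1)) (1 / ((c + 1 : ℕ) : ℝ)) (Zt 3 (c + 1)) (Zt 5 (c + 1)) (Zt 7 (c + 1))

lemma BB_nonneg (c : ℕ) : 0 ≤ BB c := by
  have := pp_pos (k := c + 1) (Nat.le_add_left 1 c)
  unfold BB; positivity

lemma AA_nonneg (b c : ℕ) : 0 ≤ AA b c := by
  have h1 : (0:ℝ) ≤ 2 * ((b + c + 1 : ℕ) : ℝ) + 1 := by positivity
  have h2 : (0:ℝ) ≤ pp (b + c + 1) - pp (c + 1) := sub_nonneg.2 (pp_mono (by omega))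
  have h3 : (0:ℝ) < pp (b + c + 1) ^ 4 := by
    have := pp_pos (k := b + c + 1) (by omega); positivity
  unfold AA; positivity

lemma h1sum (b c : ℕ) : HasSum (fun a => FF (a, b, c)) (W c b) := by
  have H := (L1 (b + c + 1) (c + 1) (b + c + 1) (by omega) (by omega) le_rfl).mul_left
    (BB c * AA b c)
  simpa [FF, W, mul_assoc] using H

lemma h2sum (c : ℕ) : HasSum (fun b => W c b) (G c) := by
  have H := (L2 (c + 1) (by omega)).mul_left (BB c)
  have he : (fun b => BB c *
      ((2 * ((c + 1 + b : ℕ) : ℝ) + 1) * (pp (c + 1 + b) - pp (c + 1)) / pp (c + 1 + b) ^ 4 *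
        P1 (pp (c + 1 + b)) (pp (c + 1)) (1 / ((c + 1 + b : ℕ) : ℝ)) (Zt 3 (c + 1 + b)))) =
      fun b => W c b := by
    funext b
    rw [show c + 1 + b = b + c + 1 from by omega]
    simp [W, AA, mul_assoc]
  rw [← he]
  exact H

lemma h3sum : HasSum G (P3e 1 (Zt 3 1) (Zt 5 1) (Zt 7 1)) := by
  unfold G BB
  exact L3

lemma FF_nonneg (q : ℕ × ℕ × ℕ) : 0 ≤ FF q := by
  obtain ⟨a, b, c⟩ := q
  have h1 := BB_nonneg c
  have h2 := AA_nonneg b c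
  have h3 := g1_nonneg (b + c + 1) (c + 1) (k := b + c + 1 + a) (by omega) (by omega) (by omega)
  unfold FF
  exact mul_nonneg (mul_nonneg h1 h2) h3

lemma W_nonneg (c b : ℕ) : 0 ≤ W c b := by
  have h3 := P1val_nonneg (c + 1) (b + c + 1) (by omega) (by omega)
  exact mul_nonneg (mul_nonneg (BB_nonneg c) (AA_nonneg b c)) h3

lemma main_hasSum : HasSum FF (P3e 1 (Zt 3 1) (Zt 5 1) (Zt 7 1)) := by
  set total := P3e 1 (Zt 3 1) (Zt 5 1) (Zt 7 1) with htot
  have f'def : ∀ (p : ℕ × ℕ) (a : ℕ), FF (a, p.2, p.1) = FF (a, p.2, p.1) := fun _ _ => rfl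
  -- f' : (ℕ×ℕ)×ℕ → ℝ
  set f' : (ℕ × ℕ) × ℕ → ℝ := fun p => FF (p.2, p.1.2, p.1.1) with hf'
  have hfib : ∀ p : ℕ × ℕ, Summable fun a => f' (p, a) := fun p => (h1sum p.2 p.1).summable
  have hWsummable : Summable (fun p : ℕ × ℕ => W p.1 p.2) := by
    refine (summable_prod_of_nonneg ?_).2 ⟨fun c => (h2sum c).summable, ?_⟩
    · intro p; exact W_nonneg p.1 p.2
    · refine Summable.congr h3sum.summable fun c => ?_
      exact ((h2sum c).tsum_eq).symm
  have hsf' : Summable f' := by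
    refine (summable_prod_of_nonneg ?_).2 ⟨hfib, ?_⟩
    · intro p; exact FF_nonneg _
    · refine Summable.congr hWsummable fun p => ?_
      exact ((h1sum p.2 p.1).tsum_eq).symm
  have H : HasSum f' (∑' p, f' p) := hsf'.hasSum
  have Hb : HasSum (fun p : ℕ × ℕ => W p.1 p.2) (∑' p, f' p) :=
    H.prod_fiberwise fun p => h1sum p.2 p.1
  have Hc : HasSum G (∑' p, f' p) := Hb.prod_fiberwise fun c => h2sum c
  have heq : (∑' p, f' p) = total := Hc.unique h3sum
  rw [heq] at H
  let e : (ℕ × ℕ × ℕ) ≃ (ℕ × ℕ) × ℕ :=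
    ⟨fun q => ((q.2.2, q.2.1), q.1), fun p => (p.2, p.1.2, p.1.1), fun q => rfl, fun p => rfl⟩
  have h := (e.hasSum_iff (f := f') (a := total)).2 H
  have hce : f' ∘ ⇑e = FF := by funext q; rfl
  rwa [hce] at h

lemma zt_one_eq_zeta (s : ℕ) : Zt s 1 = zeta s := by
  unfold Zt zeta
  refine tsum_congr fun k => ?_
  norm_num

lemma poch_two (x : ℝ) : poch x 2 = x * (x + 1) := by
  simp [poch, Finset.prod_range_succ]

lemma fq_core (x1 x2 x3 : ℝ) (h1 : x1 ≠ 0) (h1' : x1 + 1 ≠ 0) (h2 : x2 ≠ 0)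
    (h2' : x2 + 1 ≠ 0) (h3 : x3 ≠ 0) (h3' : x3 + 1 ≠ 0) :
    (x1 + 1 / 2) * (x2 + 1 / 2) * (x3 + 1 / 2) *
        ((x1 - x2) * (x2 - x3) * (x1 - x3) * (x1 + x2 + 1) * (x1 + x3 + 1) * (x2 + x3 + 1)) /
        ((x1 * (x1 + 1)) ^ 4 * (x2 * (x2 + 1)) ^ 4 * (x3 * (x3 + 1)) ^ 4) =
      (2 * x3 + 1) / (8 * (x3 * (x3 + 1)) ^ 4) *
          ((2 * x2 + 1) * (x2 * (x2 + 1) - x3 * (x3 + 1)) / (x2 * (x2 + 1)) ^ 4) *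
          ((2 * x1 + 1) * (x1 * (x1 + 1) - x2 * (x2 + 1)) * (x1 * (x1 + 1) - x3 * (x3 + 1)) /
            (x1 * (x1 + 1)) ^ 4) := by
  rw [div_mul_div_comm, div_mul_div_comm, div_eq_div_iff (by positivity) (by positivity)]
  ring


lemma fq_eq (a b c : ℕ) :
    (((a : ℝ) + (b : ℝ) + (c : ℝ) + 1) + 1 / 2) * (((b : ℝ) + (c : ℝ) + 1) + 1 / 2) *
          (((c : ℝ) + 1) + 1 / 2) *
          (((((a : ℝ) + (b : ℝ) + (c : ℝ) + 1) - ((b : ℝ) + (c : ℝ) + 1)) *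
                ((((b : ℝ) + (c : ℝ) + 1) - ((c : ℝ) + 1))) *
                ((((a : ℝ) + (b : ℝ) + (c : ℝ) + 1) - ((c : ℝ) + 1))) *
                (((a : ℝ) + (b : ℝ) + (c : ℝ) + 1) + ((b : ℝ) + (c : ℝ) + 1) + 1) *
                (((a : ℝ) + (b : ℝ) + (c : ℝ) + 1) + ((c : ℝ) + 1) + 1) *
                (((b : ℝ) + (c : ℝ) + 1) + ((c : ℝ) + 1) + 1))) /
        (poch ((a : ℝ) + (b : ℝ) + (c : ℝ) + 1) 2 ^ 4 * poch ((b : ℝ) + (c : ℝ) + 1) 2 ^ 4 *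
          poch ((c : ℝ) + 1) 2 ^ 4) =
      FF (a, b, c) := by
  have hx1 : ((a : ℝ) + b + c + 1) ≠ 0 := by positivity
  have hx1' : ((a : ℝ) + b + c + 1) + 1 ≠ 0 := by positivity
  have hx2 : ((b : ℝ) + c + 1) ≠ 0 := by positivity
  have hx2' : ((b : ℝ) + c + 1) + 1 ≠ 0 := by positivity
  have hx3 : ((c : ℝ) + 1) ≠ 0 := by positivity
  have hx3' : ((c : ℝ) + 1) + 1 ≠ 0 := by positivity
  have hcore := fq_core ((a : ℝ) + b + c + 1) ((b : ℝ) + c + 1) ((c : ℝ) + 1)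
    hx1 hx1' hx2 hx2' hx3 hx3'
  simp only [FF, BB, AA, pp, poch_two]
  push_cast
  linear_combination hcore

/-- Explicit depth-3 evaluation: the triple sum over `k₁ ≥ k₂ ≥ k₃ ≥ 1`
(parametrized by `k₃ = c + 1`, `k₂ = b + k₃`, `k₁ = a + k₂`) equals
`−1/4 − ζ(3) + (1/4) ζ(5) + ζ(3)² − (1/4) ζ(7)`. -/
theorem explicit_depth_three :
    HasSum
      (fun q : ℕ × ℕ × ℕ =>
        let k1 : ℝ := (q.1 : ℝ) + (q.2.1 : ℝ) + (q.2.2 : ℝ) + 1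
        let k2 : ℝ := (q.2.1 : ℝ) + (q.2.2 : ℝ) + 1
        let k3 : ℝ := (q.2.2 : ℝ) + 1
        (k1 + 1 / 2) * (k2 + 1 / 2) * (k3 + 1 / 2) *
            ((k1 - k2) * (k2 - k3) * (k1 - k3) * (k1 + k2 + 1) * (k1 + k3 + 1) *
              (k2 + k3 + 1)) /
          (poch k1 2 ^ 4 * poch k2 2 ^ 4 * poch k3 2 ^ 4))
      (-(1 / 4) - zeta 3 + 1 / 4 * zeta 5 + zeta 3 ^ 2 - 1 / 4 * zeta 7) := by
  have hval : P3e 1 (Zt 3 1) (Zt 5 1) (Zt 7 1) =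
      -(1 / 4) - zeta 3 + 1 / 4 * zeta 5 + zeta 3 ^ 2 - 1 / 4 * zeta 7 := by
    unfold P3e
    rw [zt_one_eq_zeta, zt_one_eq_zeta, zt_one_eq_zeta]
    ring
  have H := main_hasSum
  rw [hval] at H
  convert H using 1
  funext q
  obtain ⟨a, b, c⟩ := q
  exact fq_eq a b c
end

section
/- Regularization in depth 1: for each integer s ≥ 1 and each j ∈ {0,…,n}, the sum Σ_{k=1}^{N} (1/(k+j)^s + (−1)^{s+1}/(k+n−j)^s) equals (1+(−1)^{s+1}) ζ(s) + ρ + O(1/N) when s ≥ 2, for some rational ρ with d_n^s · ρ ∈ ℤ; and when s = 1 it equals 2H_N + ρ + O(1/N) with d_n · ρ ∈ ℤ, where H_N = Σ_{k=1}^N 1/k. -/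
open scoped BigOperators

/-- d_n = lcm(1, 2, …, n). -/
def dlcm (n : ℕ) : ℕ := (Finset.Icc 1 n).lcm id


set_option maxHeartbeats 1000000
set_option linter.unreachableTactic false
set_option linter.unusedTactic false
set_option linter.unnecessarySeqFocus false

noncomputable def Pr (s M : ℕ) : ℝ := ∑ m ∈ Finset.Icc 1 M, 1 / (m : ℝ) ^ s

def Pq (s M : ℕ) : ℚ := ∑ m ∈ Finset.Icc 1 M, 1 / (m : ℚ) ^ s

lemma Pq_cast (s M : ℕ) : ((Pq s M : ℚ) : ℝ) = Pr s M := by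
  unfold Pq Pr; push_cast; rfl

lemma Pr_shift (s a N : ℕ) :
    ∑ k ∈ Finset.Icc 1 N, 1 / ((k : ℝ) + a) ^ s = Pr s (N + a) - Pr s a := by
  induction N with
  | zero => simp
  | succ N ih =>
      rw [Finset.sum_Icc_succ_top (by omega), ih,
        show N + 1 + a = (N + a) + 1 by omega]
      unfold Pr
      rw [Finset.sum_Icc_succ_top (by omega)]
      push_cast; ring

lemma Pr_range (s M : ℕ) : Pr s M = ∑ k ∈ Finset.range M, 1 / ((k : ℝ) + 1) ^ s := by
  unfold Pr
  rw [show Finset.Icc 1 M = Finset.Ico 1 (M+1) by rfl, Finset.sum_Ico_eq_sum_range]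
  simp only [Nat.add_sub_cancel]
  refine Finset.sum_congr rfl fun k _ => ?_
  push_cast; ring_nf

lemma dlcm_dvd {n i : ℕ} (h1 : 1 ≤ i) (h2 : i ≤ n) : i ∣ dlcm n := by
  simpa [dlcm] using Finset.dvd_lcm (f := id) (Finset.mem_Icc.mpr ⟨h1, h2⟩)

lemma Pq_int (n s a : ℕ) (ha : a ≤ n) :
    ∃ m : ℤ, ((dlcm n : ℚ)) ^ s * Pq s a = m := by
  refine ⟨∑ i ∈ Finset.Icc 1 a, ((dlcm n / i : ℕ) : ℤ) ^ s, ?_⟩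
  rw [Pq, Finset.mul_sum]
  push_cast
  refine Finset.sum_congr rfl fun i hi => ?_
  obtain ⟨h1, h2⟩ := Finset.mem_Icc.mp hi
  have hd : i ∣ dlcm n := dlcm_dvd h1 (h2.trans ha)
  have h3 : (dlcm n / i) * i = dlcm n :=
    Nat.div_mul_cancel hd
  have h4 : ((dlcm n : ℚ)) = ((dlcm n / i : ℕ) : ℚ) * i := by
    exact_mod_cast h3.symm
  have hi0 : (i : ℚ) ≠ 0 := by positivity
  rw [h4, mul_pow]
  field_simp
  rw [← Int.natCast_div, Int.cast_natCast]

lemma summable_pow (s : ℕ) (hs : 2 ≤ s) : Summable (fun k : ℕ => 1 / ((k : ℝ) + 1) ^ s) := by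
  have h := (Real.summable_one_div_nat_pow (p := s)).mpr hs
  have h2 := (summable_nat_add_iff 1).mpr h
  refine h2.congr fun k => ?_
  push_cast
  ring

lemma zeta_tail (s : ℕ) (hs : 2 ≤ s) (M : ℕ) (hM : 1 ≤ M) :
    0 ≤ zeta s - Pr s M ∧ zeta s - Pr s M ≤ 1 / M := by
  have hsum := summable_pow s hs
  have hsplit := Summable.sum_add_tsum_nat_add M hsum
  have hz : zeta s - Pr s M = ∑' i : ℕ, 1 / (((i + M : ℕ) : ℝ) + 1) ^ s := by
    rw [zeta, Pr_range, ← hsplit]; ring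
  have hMpos : (0:ℝ) < M := by exact_mod_cast hM
  constructor
  · rw [hz]; exact tsum_nonneg fun i => by positivity
  · rw [hz]
    refine Summable.tsum_le_of_sum_range_le ((summable_nat_add_iff M).mpr hsum) fun K => ?_
    have key : ∀ i : ℕ, 1 / (((i + M : ℕ) : ℝ) + 1) ^ s ≤
        1 / ((i : ℝ) + M) - 1 / (((i+1 : ℕ) : ℝ) + M) := by
      intro i
      have hM1 : (1:ℝ) ≤ (M:ℝ) := by exact_mod_cast hM
      have hx : (1:ℝ) ≤ (i : ℝ) + M := by
        have : (0:ℝ) ≤ (i:ℝ) := by positivity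
        linarith
      have hx1 : (1:ℝ) ≤ (i : ℝ) + M + 1 := by linarith
      have hp : ((i : ℝ) + M) * ((i : ℝ) + M + 1) ≤ (((i + M : ℕ) : ℝ) + 1) ^ s := by
        push_cast
        calc ((i : ℝ) + M) * ((i : ℝ) + M + 1) ≤ ((i : ℝ) + M + 1) ^ 2 := by nlinarith
          _ ≤ ((i : ℝ) + M + 1) ^ s := pow_le_pow_right₀ hx1 hs
      have h1 : 1 / (((i + M : ℕ) : ℝ) + 1) ^ s ≤ 1 / (((i : ℝ) + M) * ((i : ℝ) + M + 1)) :=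
        one_div_le_one_div_of_le (by positivity) hp
      have h2 : 1 / (((i : ℝ) + M) * ((i : ℝ) + M + 1)) =
          1 / ((i : ℝ) + M) - 1 / (((i+1:ℕ) : ℝ) + M) := by
        push_cast
        rw [div_sub_div _ _ (by linarith) (by linarith)]
        ring_nf
      linarith
    calc ∑ i ∈ Finset.range K, 1 / (((i + M : ℕ) : ℝ) + 1) ^ s
        ≤ ∑ i ∈ Finset.range K, (1 / ((i : ℝ) + M) - 1 / (((i+1:ℕ) : ℝ) + M)) :=
          Finset.sum_le_sum fun i _ => key i
      _ = 1 / ((0:ℝ) + M) - 1 / ((K : ℝ) + M) := by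
          simpa using Finset.sum_range_sub' (fun i : ℕ => 1 / ((i : ℝ) + M)) K
      _ ≤ 1 / M := by
          have : (0:ℝ) ≤ 1 / ((K : ℝ) + M) := by positivity
          rw [zero_add]
          linarith

lemma Pr_diff (s a N : ℕ) (hs : 1 ≤ s) (hN : 1 ≤ N) :
    0 ≤ Pr s (N + a) - Pr s N ∧ Pr s (N + a) - Pr s N ≤ a / N := by
  have h := Pr_shift s N a
  rw [Nat.add_comm a N] at h
  have hNpos : (0:ℝ) < N := by exact_mod_cast hN
  constructor
  · rw [← h]; positivity
  · rw [← h]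
    calc ∑ k ∈ Finset.Icc 1 a, 1 / ((k : ℝ) + N) ^ s
        ≤ ∑ _k ∈ Finset.Icc 1 a, 1 / (N : ℝ) := by
          refine Finset.sum_le_sum fun k hk => ?_
          have hk1 : 1 ≤ k := (Finset.mem_Icc.mp hk).1
          have h1 : (1:ℝ) ≤ (k : ℝ) + N := by
            have : (1:ℝ) ≤ (k:ℝ) := by exact_mod_cast hk1
            linarith
          have h2 : (N:ℝ) ≤ ((k:ℝ) + N) ^ s :=
            le_trans (by linarith) (le_self_pow₀ h1 (by omega))
          exact one_div_le_one_div_of_le hNpos h2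
      _ = a / N := by
          rw [Finset.sum_const, Nat.card_Icc, nsmul_eq_mul]
          push_cast
          ring

/-- Depth-1 regularization: for `s ≥ 2`,
`Σ_{k=1}^N (1/(k+j)^s + (−1)^{s+1}/(k+n−j)^s) = (1+(−1)^{s+1}) ζ(s) + ρ + O(1/N)`
with `d_n^s ρ ∈ ℤ`; for `s = 1` it equals `2 H_N + ρ + O(1/N)` with `d_n ρ ∈ ℤ`. -/
theorem depth_one_regularization (n j s : ℕ) (hj : j ≤ n) (hs : 1 ≤ s) :
    (2 ≤ s → ∃ ρ : ℚ, (∃ m : ℤ, ((dlcm n : ℚ)) ^ s * ρ = m) ∧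
      ∃ C : ℝ, ∀ N : ℕ, 1 ≤ N →
        |(∑ k ∈ Finset.Icc 1 N,
            (1 / ((k : ℝ) + j) ^ s + (-1) ^ (s + 1) / ((k : ℝ) + n - j) ^ s)) -
          ((1 + (-1 : ℝ) ^ (s + 1)) * zeta s + (ρ : ℝ))| ≤ C / N)
    ∧ (s = 1 → ∃ ρ : ℚ, (∃ m : ℤ, ((dlcm n : ℚ)) * ρ = m) ∧
      ∃ C : ℝ, ∀ N : ℕ, 1 ≤ N →
        |(∑ k ∈ Finset.Icc 1 N,
            (1 / ((k : ℝ) + j) ^ s + (-1) ^ (s + 1) / ((k : ℝ) + n - j) ^ s)) -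
          (2 * (∑ k ∈ Finset.Icc 1 N, 1 / (k : ℝ)) + (ρ : ℝ))| ≤ C / N) := by
  set a2 := n - j with ha2
  have hna : j + a2 = n := by omega
  have ha2n : a2 ≤ n := by omega
  have hc : ((a2 : ℕ) : ℝ) = (n : ℝ) - (j : ℝ) := by
    rw [ha2, Nat.cast_sub hj]
  have hsum_split : ∀ N : ℕ,
      (∑ k ∈ Finset.Icc 1 N,
        (1 / ((k : ℝ) + j) ^ s + (-1) ^ (s + 1) / ((k : ℝ) + n - j) ^ s))
      = (Pr s (N + j) - Pr s j) + (-1 : ℝ) ^ (s + 1) * (Pr s (N + a2) - Pr s a2) := by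
    intro N
    rw [Finset.sum_add_distrib]
    congr 1
    · exact Pr_shift s j N
    · calc ∑ k ∈ Finset.Icc 1 N, (-1 : ℝ) ^ (s + 1) / ((k : ℝ) + n - j) ^ s
          = ∑ k ∈ Finset.Icc 1 N, (-1 : ℝ) ^ (s + 1) * (1 / ((k : ℝ) + a2) ^ s) := by
            refine Finset.sum_congr rfl fun k _ => ?_
            rw [hc]; ring
        _ = (-1 : ℝ) ^ (s + 1) * ∑ k ∈ Finset.Icc 1 N, 1 / ((k : ℝ) + a2) ^ s :=
            (Finset.mul_sum _ _ _).symm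
        _ = (-1 : ℝ) ^ (s + 1) * (Pr s (N + a2) - Pr s a2) := by rw [Pr_shift]
  constructor
  · -- s ≥ 2
    intro hs2
    obtain ⟨m1, h1⟩ := Pq_int n s j hj
    obtain ⟨m2, h2⟩ := Pq_int n s a2 ha2n
    rcases Nat.even_or_odd s with he | ho
    · -- even s
      have hsign : (-1 : ℝ) ^ (s + 1) = -1 := (Even.add_one he).neg_one_pow
      refine ⟨Pq s a2 - Pq s j, ⟨m2 - m1, by rw [mul_sub, h1, h2]; push_cast; ring⟩,
        (n : ℝ), fun N hN => ?_⟩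
      have hρ : ((Pq s a2 - Pq s j : ℚ) : ℝ) = Pr s a2 - Pr s j := by
        push_cast [Pq_cast]; ring
      rw [hsum_split N, hsign, hρ]
      obtain ⟨hd1, hd2⟩ := Pr_diff s j N hs hN
      obtain ⟨hd3, hd4⟩ := Pr_diff s a2 N hs hN
      have hNpos : (0:ℝ) < N := by exact_mod_cast hN
      have hjn : (j : ℝ) / N ≤ (n : ℝ) / N := by
        gcongr <;> omega
      have ha2n' : (a2 : ℝ) / N ≤ (n : ℝ) / N := by
        gcongr <;> omega
      rw [abs_le]
      constructor <;> nlinarith [hd1, hd2, hd3, hd4]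
    · -- odd s
      have hsign : (-1 : ℝ) ^ (s + 1) = 1 := (Odd.add_one ho).neg_one_pow
      refine ⟨-(Pq s j + Pq s a2), ⟨-(m1 + m2), by rw [mul_neg, mul_add, h1, h2]; push_cast; ring⟩,
        (2 : ℝ), fun N hN => ?_⟩
      have hρ : ((-(Pq s j + Pq s a2) : ℚ) : ℝ) = -(Pr s j + Pr s a2) := by
        push_cast [Pq_cast]; ring
      rw [hsum_split N, hsign, hρ]
      obtain ⟨ht1, ht2⟩ := zeta_tail s hs2 (N + j) (by omega)
      obtain ⟨ht3, ht4⟩ := zeta_tail s hs2 (N + a2) (by omega)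
      have hNpos : (0:ℝ) < N := by exact_mod_cast hN
      have hb1 : 1 / ((N + j : ℕ) : ℝ) ≤ 1 / (N : ℝ) := by
        gcongr <;> omega
      have hb2 : 1 / ((N + a2 : ℕ) : ℝ) ≤ 1 / (N : ℝ) := by
        gcongr <;> omega
      have h1N : (0:ℝ) < 1 / (N : ℝ) := by positivity
      have h2N : (2:ℝ) / N = 1 / N + 1 / N := by ring
      rw [abs_le]
      constructor <;> linarith [ht1, ht2, ht3, ht4, hb1, hb2, h1N, h2N]
  · -- s = 1
    intro hs1
    subst hs1
    obtain ⟨m1, h1⟩ := Pq_int n 1 j hj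
    obtain ⟨m2, h2⟩ := Pq_int n 1 a2 ha2n
    rw [pow_one] at h1 h2
    refine ⟨-(Pq 1 j + Pq 1 a2), ⟨-(m1 + m2), by rw [mul_neg, mul_add, h1, h2]; push_cast; ring⟩,
      (n : ℝ), fun N hN => ?_⟩
    have hρ : ((-(Pq 1 j + Pq 1 a2) : ℚ) : ℝ) = -(Pr 1 j + Pr 1 a2) := by
      push_cast [Pq_cast]; ring
    have hH : ∑ k ∈ Finset.Icc 1 N, 1 / (k : ℝ) = Pr 1 N := by
      simp [Pr]
    rw [hsum_split N, hρ, hH]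
    have hsign : (-1 : ℝ) ^ (1 + 1) = 1 := by norm_num
    rw [hsign]
    obtain ⟨hd1, hd2⟩ := Pr_diff 1 j N le_rfl hN
    obtain ⟨hd3, hd4⟩ := Pr_diff 1 a2 N le_rfl hN
    have hNpos : (0:ℝ) < N := by exact_mod_cast hN
    have hjn : (j : ℝ) / N + (a2 : ℝ) / N = (n : ℝ) / N := by
      rw [← add_div]
      congr 1
      exact_mod_cast hna
    rw [abs_le]
    constructor <;> nlinarith [hd1, hd2, hd3, hd4]
end

section
/- Depth-1 partial fraction integrality: for every integer r with 0 ≤ r ≤ A(n+1)−1, there exist rationals E_{j,s} (0 ≤ j ≤ n, 1 ≤ s ≤ A) with n!^A k^r / (k)_{n+1}^A = Σ_{j=0}^{n} Σ_{s=1}^{A} E_{j,s}/(k+j)^s and d_n^{A−s} E_{j,s} ∈ ℤ for all j, s. -/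
open scoped BigOperators

noncomputable section
namespace DepthOne

/-- power series whose `u`-th coefficient times `dlcm n ^ u` is an integer -/
def Dint (n : ℕ) (f : PowerSeries ℚ) : Prop :=
  ∀ u : ℕ, ∃ m : ℤ, ((dlcm n : ℚ)) ^ u * PowerSeries.coeff u f = m

lemma Dint_C (n : ℕ) (m : ℤ) : Dint n (PowerSeries.C (m : ℚ)) := by
  intro u
  rcases Nat.eq_zero_or_pos u with h | h
  · exact ⟨m, by simp [h]⟩
  · refine ⟨0, ?_⟩
    rw [PowerSeries.coeff_C, if_neg (Nat.pos_iff_ne_zero.mp h)]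
    simp

lemma Dint_X (n : ℕ) : Dint n PowerSeries.X := by
  intro u
  by_cases h : u = 1
  · exact ⟨dlcm n, by simp [h, PowerSeries.coeff_X]⟩
  · exact ⟨0, by simp [PowerSeries.coeff_X, h]⟩

lemma Dint.add {n : ℕ} {f g : PowerSeries ℚ} (hf : Dint n f) (hg : Dint n g) :
    Dint n (f + g) := by
  intro u
  obtain ⟨a, ha⟩ := hf u; obtain ⟨b, hb⟩ := hg u
  exact ⟨a + b, by rw [map_add, mul_add, ha, hb]; push_cast; ring⟩

lemma Dint.mul {n : ℕ} {f g : PowerSeries ℚ} (hf : Dint n f) (hg : Dint n g) :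
    Dint n (f * g) := by
  intro u
  choose a ha using hf
  choose b hb using hg
  refine ⟨∑ p ∈ Finset.HasAntidiagonal.antidiagonal u, a p.1 * b p.2, ?_⟩
  rw [PowerSeries.coeff_mul, Finset.mul_sum]
  push_cast
  refine Finset.sum_congr rfl fun p hp => ?_
  have hpu : p.1 + p.2 = u := Finset.HasAntidiagonal.mem_antidiagonal.mp hp
  calc ((dlcm n : ℚ)) ^ u * (PowerSeries.coeff p.1 f * PowerSeries.coeff p.2 g)
      = ((dlcm n : ℚ) ^ p.1 * PowerSeries.coeff p.1 f) *
        ((dlcm n : ℚ) ^ p.2 * PowerSeries.coeff p.2 g) := by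
        rw [← hpu, pow_add]; ring
    _ = (a p.1 : ℚ) * (b p.2 : ℚ) := by rw [ha, hb]

lemma Dint.pow {n : ℕ} {f : PowerSeries ℚ} (hf : Dint n f) (A : ℕ) : Dint n (f ^ A) := by
  induction A with
  | zero => simpa using Dint_C n 1
  | succ A ih => rw [pow_succ]; exact ih.mul hf

lemma Dint.prod {n : ℕ} {ι : Type*} (s : Finset ι) (f : ι → PowerSeries ℚ)
    (hf : ∀ i ∈ s, Dint n (f i)) : Dint n (∏ i ∈ s, f i) := by
  classical
  induction s using Finset.induction_on with
  | empty => simpa using Dint_C n 1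
  | insert _ _ hmem ih =>
    rw [Finset.prod_insert hmem]
    exact (hf _ (Finset.mem_insert_self _ _)).mul
      (ih fun i hi => hf i (Finset.mem_insert_of_mem hi))

/-- the brick `c / (X + c)` -/
def B (c : ℚ) : PowerSeries ℚ := PowerSeries.mk fun u => (-1 / c) ^ u

lemma B_mul (c : ℚ) (hc : c ≠ 0) :
    (PowerSeries.X + PowerSeries.C c) * B c = PowerSeries.C c := by
  ext u
  rw [add_mul, map_add]
  cases u with
  | zero => simp [B]
  | succ u =>
    rw [PowerSeries.coeff_succ_X_mul, PowerSeries.coeff_C_mul, PowerSeries.coeff_C]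
    simp only [B, PowerSeries.coeff_mk, Nat.succ_ne_zero, if_false]
    rw [pow_succ]
    field_simp
    ring

lemma Dint_B (n : ℕ) (c : ℚ) (hc : c ≠ 0) (e : ℤ) (he : c * e = (dlcm n : ℚ)) :
    Dint n (B c) := by
  intro u
  refine ⟨(-e) ^ u, ?_⟩
  have hd : (dlcm n : ℚ) = c * e := he.symm
  rw [B, PowerSeries.coeff_mk, hd, ← mul_pow]
  have : c * (e:ℚ) * (-1 / c) = ((-e : ℤ) : ℚ) := by push_cast; field_simp
  rw [this]
  push_cast
  ring

lemma exists_e (n t j : ℕ) (ht : t ≤ n) (hj : j ≤ n) (hne : t ≠ j) :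
    ∃ e : ℤ, ((t : ℚ) - (j : ℚ)) * e = (dlcm n : ℚ) := by
  have hmem : ((t : ℤ) - (j : ℤ)).natAbs ∈ Finset.Icc 1 n := by
    refine Finset.mem_Icc.mpr ⟨?_, ?_⟩ <;> omega
  have hdvd : (((t : ℤ) - (j : ℤ)).natAbs : ℕ) ∣ dlcm n := Finset.dvd_lcm hmem
  have hdvd' : ((t : ℤ) - (j : ℤ)) ∣ (dlcm n : ℤ) := Int.natAbs_dvd.mp (Int.ofNat_dvd.mpr hdvd)
  obtain ⟨e, he⟩ := hdvd'
  exact ⟨e, by exact_mod_cast he.symm⟩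


open Polynomial

def bb (n A j s : ℕ) : Polynomial ℚ :=
  (X + C (j : ℚ)) ^ (A - s) *
    ∏ t ∈ (Finset.range (n + 1)).erase j, (X + C (t : ℚ)) ^ A

def W (n A j : ℕ) : PowerSeries ℚ :=
  ∏ t ∈ (Finset.range (n + 1)).erase j, (B ((t : ℚ) - (j : ℚ))) ^ A

def Pp (n j : ℕ) : ℚ := ∏ t ∈ (Finset.range (n + 1)).erase j, ((t : ℚ) - (j : ℚ))

def phi (j : ℕ) : Polynomial ℚ →ₐ[ℚ] PowerSeries ℚ :=
  Polynomial.aeval (PowerSeries.X - PowerSeries.C (j : ℚ))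

lemma phi_term (n A j j' s' : ℕ) (E : ℚ) :
    phi j (C E * bb n A j' s') =
      PowerSeries.C E * (PowerSeries.X + PowerSeries.C ((j' : ℚ) - (j : ℚ))) ^ (A - s') *
        ∏ t ∈ (Finset.range (n + 1)).erase j',
          (PowerSeries.X + PowerSeries.C ((t : ℚ) - (j : ℚ))) ^ A := by
  have key : ∀ c : ℚ, PowerSeries.X - PowerSeries.C (j : ℚ) + PowerSeries.C c
      = PowerSeries.X + PowerSeries.C (c - (j : ℚ)) := fun c => by rw [map_sub]; ring
  simp only [phi, bb, map_mul, map_pow, map_prod, map_add, Polynomial.aeval_X,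
    Polynomial.aeval_C, PowerSeries.algebraMap_apply, Algebra.algebraMap_self, RingHom.id_apply]
  have hp : (∏ t ∈ (Finset.range (n + 1)).erase j',
      (PowerSeries.X - PowerSeries.C (j : ℚ) + PowerSeries.C (t : ℚ)) ^ A)
      = ∏ t ∈ (Finset.range (n + 1)).erase j',
        (PowerSeries.X + PowerSeries.C ((t : ℚ) - (j : ℚ))) ^ A :=
    Finset.prod_congr rfl fun t _ => by rw [key]
  rw [key, hp, mul_assoc]

lemma prod_mul_W (n A j : ℕ) (hj : j ≤ n) :
    (∏ t ∈ (Finset.range (n + 1)).erase j,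
        (PowerSeries.X + PowerSeries.C ((t : ℚ) - (j : ℚ))) ^ A) * W n A j
      = PowerSeries.C (Pp n j ^ A) := by
  rw [W, ← Finset.prod_mul_distrib]
  have h : ∀ t ∈ (Finset.range (n + 1)).erase j,
      (PowerSeries.X + PowerSeries.C ((t : ℚ) - (j : ℚ))) ^ A * (B ((t : ℚ) - (j : ℚ))) ^ A
        = PowerSeries.C (((t : ℚ) - (j : ℚ)) ^ A) := by
    intro t ht
    have hne : (t : ℚ) - (j : ℚ) ≠ 0 := by
      have := Finset.ne_of_mem_erase ht
      rw [sub_ne_zero]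
      exact_mod_cast this
    rw [← mul_pow, B_mul _ hne, ← map_pow]
  rw [Finset.prod_congr rfl h, ← map_prod, Pp, Finset.prod_pow]

lemma coeff_main (n A j e u : ℕ) (a : ℚ) (hj : j ≤ n) :
    PowerSeries.coeff u (PowerSeries.C a * PowerSeries.X ^ e *
      (∏ t ∈ (Finset.range (n + 1)).erase j,
        (PowerSeries.X + PowerSeries.C ((t : ℚ) - (j : ℚ))) ^ A) * W n A j)
      = if u = e then a * Pp n j ^ A else 0 := by
  rw [mul_assoc (PowerSeries.C a * PowerSeries.X ^ e), prod_mul_W n A j hj]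
  rw [mul_comm (PowerSeries.C a * PowerSeries.X ^ e), ← mul_assoc, ← map_mul]
  rw [PowerSeries.coeff_C_mul_X_pow]
  split <;> ring

lemma keyExt (n A : ℕ) (E : ℕ → ℕ → ℚ) (g : Polynomial ℚ)
    (hg : g = ∑ j ∈ Finset.range (n + 1), ∑ s ∈ Finset.Icc 1 A, C (E j s) * bb n A j s)
    (j s : ℕ) (hj : j ≤ n) (hs1 : 1 ≤ s) (hsA : s ≤ A) :
    PowerSeries.coeff (A - s) (phi j g * W n A j) = E j s * (Pp n j) ^ A := by
  have hjmem : j ∈ Finset.range (n + 1) := Finset.mem_range.mpr (by omega)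
  have hself : (PowerSeries.X + PowerSeries.C ((j : ℚ) - (j : ℚ)))
      = (PowerSeries.X : PowerSeries ℚ) := by
    rw [sub_self, map_zero, add_zero]
  subst hg
  rw [map_sum, Finset.sum_mul, map_sum]
  rw [Finset.sum_eq_single_of_mem j hjmem]
  · rw [map_sum, Finset.sum_mul, map_sum]
    rw [Finset.sum_eq_single_of_mem s (Finset.mem_Icc.mpr ⟨hs1, hsA⟩)]
    · rw [phi_term, hself, coeff_main n A j _ _ _ hj, if_pos rfl]
    · intro s' hs' hne
      rw [phi_term, hself, coeff_main n A j _ _ _ hj, if_neg ?_]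
      have := Finset.mem_Icc.mp hs'
      omega
  · intro j' hj' hne
    rw [map_sum, Finset.sum_mul, map_sum]
    refine Finset.sum_eq_zero fun s' _ => ?_
    have hdvd : (PowerSeries.X : PowerSeries ℚ) ^ A ∣
        phi j (C (E j' s') * bb n A j' s') * W n A j := by
      rw [phi_term]
      have hjmem' : j ∈ (Finset.range (n + 1)).erase j' :=
        Finset.mem_erase.mpr ⟨Ne.symm hne, hjmem⟩
      have hX : (PowerSeries.X : PowerSeries ℚ) ^ A =
          (PowerSeries.X + PowerSeries.C ((j : ℚ) - (j : ℚ))) ^ A := by rw [hself]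
      rw [hX]
      exact Dvd.dvd.mul_right
        (Dvd.dvd.mul_left (Finset.dvd_prod_of_mem _ hjmem') _) _
    exact PowerSeries.X_pow_dvd_iff.mp hdvd _ (Nat.sub_lt (by omega) (by omega))

lemma Pp_eq (n j : ℕ) (hj : j ≤ n) :
    Pp n j = (-1 : ℚ) ^ j * (j.factorial : ℚ) * ((n - j).factorial : ℚ) := by
  have hsplit : (Finset.range (n + 1)).erase j
      = Finset.range j ∪ Finset.Ico (j + 1) (n + 1) := by
    ext t
    simp only [Finset.mem_erase, Finset.mem_range, Finset.mem_union, Finset.mem_Ico]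
    omega
  have hdisj : Disjoint (Finset.range j) (Finset.Ico (j + 1) (n + 1)) := by
    rw [Finset.disjoint_left]
    intro t ht ht'
    simp only [Finset.mem_range] at ht
    simp only [Finset.mem_Ico] at ht'
    omega
  rw [Pp, hsplit, Finset.prod_union hdisj]
  have h1 : (∏ t ∈ Finset.range j, ((t : ℚ) - (j : ℚ)))
      = (-1 : ℚ) ^ j * (j.factorial : ℚ) := by
    rw [← Finset.prod_range_reflect (fun t => ((t : ℚ) - (j : ℚ))) j]
    have hterm : ∀ i ∈ Finset.range j, (((j - 1 - i : ℕ) : ℚ) - (j : ℚ))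
        = -1 * ((i : ℚ) + 1) := by
      intro i hi
      have hij : i < j := Finset.mem_range.mp hi
      have : ((j - 1 - i : ℕ) : ℚ) = (j : ℚ) - 1 - (i : ℚ) := by
        rw [Nat.sub_sub]
        rw [Nat.cast_sub (by omega)]
        push_cast
        ring
      rw [this]; ring
    rw [Finset.prod_congr rfl hterm, Finset.prod_mul_distrib, Finset.prod_const]
    have : (∏ i ∈ Finset.range j, ((i : ℚ) + 1)) = (j.factorial : ℚ) := by
      rw [← Finset.prod_range_add_one_eq_factorial j]
      push_cast
      rfl
    rw [this, Finset.card_range]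
  have h2 : (∏ t ∈ Finset.Ico (j + 1) (n + 1), ((t : ℚ) - (j : ℚ)))
      = ((n - j).factorial : ℚ) := by
    rw [Finset.prod_Ico_eq_prod_range]
    have hnm : n + 1 - (j + 1) = n - j := by omega
    rw [hnm]
    have hterm : ∀ i ∈ Finset.range (n - j), (((j + 1 + i : ℕ) : ℚ) - (j : ℚ))
        = ((i : ℚ) + 1) := by
      intro i _
      push_cast
      ring
    rw [Finset.prod_congr rfl hterm]
    rw [← Finset.prod_range_add_one_eq_factorial (n - j)]
    push_cast
    rfl
  rw [h1, h2]

lemma Pp_ne_zero (n j : ℕ) (hj : j ≤ n) : Pp n j ≠ 0 := by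
  rw [Pp_eq n j hj]
  positivity

lemma fact_pow_eq (n j A : ℕ) (hj : j ≤ n) :
    ((n.factorial : ℚ)) ^ A
      = ((n.choose j : ℚ)) ^ A * ((-1 : ℚ) ^ j) ^ A * (Pp n j) ^ A := by
  have h := Nat.choose_mul_factorial_mul_factorial hj
  have hq : (n.factorial : ℚ) = (n.choose j : ℚ) * ((-1 : ℚ) ^ j) * Pp n j := by
    rw [Pp_eq n j hj]
    have : ((n.choose j * j.factorial * (n - j).factorial : ℕ) : ℚ)
        = ((n.factorial : ℕ) : ℚ) := by exact_mod_cast h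
    push_cast at this
    rw [← this]
    have hsq : (-1 : ℚ) ^ j * (-1 : ℚ) ^ j = 1 := by
      rw [← pow_add]
      exact Even.neg_one_pow ⟨j, rfl⟩
    nlinarith [hsq]
  rw [hq]
  ring

lemma Dint_XsubC (n j : ℕ) : Dint n (PowerSeries.X - PowerSeries.C (j : ℚ)) := by
  have h : PowerSeries.X - PowerSeries.C (j : ℚ)
      = PowerSeries.X + PowerSeries.C (((-(j : ℤ)) : ℤ) : ℚ) := by
    rw [Int.cast_neg, Int.cast_natCast, map_neg]
    ring
  rw [h]
  exact (Dint_X n).add (Dint_C n _)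

lemma Dint_W (n A j : ℕ) (hj : j ≤ n) : Dint n (W n A j) := by
  refine Dint.prod _ _ fun t ht => ?_
  have htn : t ≤ n := by
    have := Finset.mem_of_mem_erase ht
    simp only [Finset.mem_range] at this
    omega
  have htj : t ≠ j := Finset.ne_of_mem_erase ht
  have hne : (t : ℚ) - (j : ℚ) ≠ 0 := by
    rw [sub_ne_zero]; exact_mod_cast htj
  obtain ⟨e, he⟩ := exists_e n t j htn hj htj
  exact (Dint_B n _ hne e he).pow A

lemma final_int (n A r : ℕ) (E : ℕ → ℕ → ℚ)
    (hg : (C ((n.factorial : ℚ) ^ A) * X ^ r : Polynomial ℚ)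
      = ∑ j ∈ Finset.range (n + 1), ∑ s ∈ Finset.Icc 1 A, C (E j s) * bb n A j s)
    (j s : ℕ) (hj : j ≤ n) (hs1 : 1 ≤ s) (hsA : s ≤ A) :
    ∃ m : ℤ, (dlcm n : ℚ) ^ (A - s) * E j s = m := by
  have hkey := keyExt n A E _ hg j s hj hs1 hsA
  have hphi : phi j (C ((n.factorial : ℚ) ^ A) * X ^ r)
      = PowerSeries.C ((n.factorial : ℚ) ^ A) *
        (PowerSeries.X - PowerSeries.C (j : ℚ)) ^ r := by
    simp [phi, map_mul, map_pow, Polynomial.aeval_X, Polynomial.aeval_C,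
      PowerSeries.algebraMap_apply]
  rw [hphi, mul_assoc, PowerSeries.coeff_C_mul] at hkey
  set c : ℚ := PowerSeries.coeff (A - s)
    ((PowerSeries.X - PowerSeries.C (j : ℚ)) ^ r * W n A j) with hc
  have hD : Dint n ((PowerSeries.X - PowerSeries.C (j : ℚ)) ^ r * W n A j) :=
    ((Dint_XsubC n j).pow r).mul (Dint_W n A j hj)
  obtain ⟨m, hm⟩ := hD (A - s)
  have hE : E j s = ((n.choose j : ℚ)) ^ A * ((-1 : ℚ) ^ j) ^ A * c := by
    have h1 : E j s * (Pp n j) ^ A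
        = ((n.choose j : ℚ)) ^ A * ((-1 : ℚ) ^ j) ^ A * c * (Pp n j) ^ A := by
      rw [← hkey, fact_pow_eq n j A hj]
      ring
    exact mul_right_cancel₀ (pow_ne_zero A (Pp_ne_zero n j hj)) h1
  refine ⟨(n.choose j : ℤ) ^ A * ((-1 : ℤ) ^ j) ^ A * m, ?_⟩
  have hmc : ((dlcm n : ℚ)) ^ (A - s) * c = (m : ℚ) := hm
  rw [hE]
  push_cast
  linear_combination ((n.choose j : ℚ)) ^ A * ((-1 : ℚ) ^ j) ^ A * hmc

lemma reindex {M : Type*} [AddCommMonoid M] (n A : ℕ) (F : ℕ → ℕ → M) :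
    (∑ j ∈ Finset.range (n + 1), ∑ s ∈ Finset.Icc 1 A, F j s)
      = ∑ p : Fin (n + 1) × Fin A, F p.1 (p.2 + 1) := by
  rw [Fintype.sum_prod_type, ← Fin.sum_univ_eq_sum_range (fun j =>
    ∑ s ∈ Finset.Icc 1 A, F j s) (n + 1)]
  refine Finset.sum_congr rfl fun j _ => ?_
  rw [← Finset.Ico_add_one_right_eq_Icc, Finset.sum_Ico_eq_sum_range]
  simp only [Nat.add_sub_cancel]
  rw [← Fin.sum_univ_eq_sum_range (fun i => F j (1 + i)) A]
  exact Finset.sum_congr rfl fun i _ => congrArg (F (j : ℕ)) (Nat.add_comm 1 (i : ℕ))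

lemma bb_mem (n A : ℕ) (hA : 1 ≤ A) (j s : ℕ) (hj : j ≤ n) (hs1 : 1 ≤ s) :
    bb n A j s ∈ Polynomial.degreeLT ℚ (A * (n + 1)) := by
  rw [Polynomial.mem_degreeLT]
  have hjm : j ∈ Finset.range (n + 1) := Finset.mem_range.mpr (by omega)
  have hnd : (bb n A j s).natDegree ≤ (A - s) + n * A := by
    refine le_trans (Polynomial.natDegree_mul_le) (add_le_add ?_ ?_)
    · refine le_trans (Polynomial.natDegree_pow_le) ?_
      rw [Polynomial.natDegree_X_add_C]
      omega
    · refine le_trans (Polynomial.natDegree_prod_le _ _) ?_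
      have hb : ∀ t ∈ (Finset.range (n + 1)).erase j,
          ((X + C (t : ℚ)) ^ A).natDegree ≤ A := by
        intro t _
        refine le_trans (Polynomial.natDegree_pow_le) ?_
        rw [Polynomial.natDegree_X_add_C]
        omega
      refine le_trans (Finset.sum_le_sum hb) ?_
      rw [Finset.sum_const, Finset.card_erase_of_mem hjm, Finset.card_range]
      simp [Nat.smul_one_eq_cast]
  have hlt : (bb n A j s).natDegree < A * (n + 1) := by
    have h1 : A * (n + 1) = A + n * A := by ring
    omega
  exact lt_of_le_of_lt Polynomial.degree_le_natDegree (by exact_mod_cast hlt)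

def EEof (n A : ℕ) (f : Fin (n + 1) × Fin A → ℚ) : ℕ → ℕ → ℚ :=
  fun j s => if h : j < n + 1 ∧ s - 1 < A ∧ 1 ≤ s
    then f (⟨j, h.1⟩, ⟨s - 1, h.2.1⟩) else 0

lemma EEof_apply (n A : ℕ) (f : Fin (n + 1) × Fin A → ℚ) (p : Fin (n + 1) × Fin A) :
    EEof n A f p.1 ((p.2 : ℕ) + 1) = f p := by
  have h : (p.1 : ℕ) < n + 1 ∧ (p.2 : ℕ) + 1 - 1 < A ∧ 1 ≤ (p.2 : ℕ) + 1 :=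
    ⟨p.1.isLt, by simp [p.2.isLt], by omega⟩
  simp only [EEof]
  rw [dif_pos h]
  congr 1 <;> try (ext <;> simp)

lemma exists_decomp (n A r : ℕ) (hA : 1 ≤ A) (hr : r < A * (n + 1)) :
    ∃ E : ℕ → ℕ → ℚ, ((X : Polynomial ℚ) ^ r)
      = ∑ j ∈ Finset.range (n + 1), ∑ s ∈ Finset.Icc 1 A, C (E j s) * bb n A j s := by
  classical
  set N := A * (n + 1) with hN
  let b' : Fin (n + 1) × Fin A → Polynomial.degreeLT ℚ N :=
    fun p => ⟨bb n A p.1 (p.2 + 1),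
      bb_mem n A hA p.1 (p.2 + 1) (by omega) (by omega)⟩
  let L : ((Fin (n + 1) × Fin A) → ℚ) →ₗ[ℚ] Polynomial.degreeLT ℚ N :=
    Fintype.linearCombination ℚ b'
  have hLapp : ∀ f, ((L f : Polynomial.degreeLT ℚ N) : Polynomial ℚ)
      = ∑ p : Fin (n + 1) × Fin A, C (f p) * bb n A p.1 (p.2 + 1) := by
    intro f
    have : L f = ∑ p : Fin (n + 1) × Fin A, f p • b' p := by
      rw [Fintype.linearCombination_apply]
    rw [this, AddSubmonoidClass.coe_finset_sum]
    refine Finset.sum_congr rfl fun p _ => ?_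
    simp [Polynomial.smul_eq_C_mul, b']
  have hinj : Function.Injective L := by
    rw [← LinearMap.ker_eq_bot, eq_bot_iff]
    intro f hf
    simp only [LinearMap.mem_ker] at hf
    have hf0 : ((L f : Polynomial.degreeLT ℚ N) : Polynomial ℚ) = 0 := by rw [hf]; rfl
    rw [hLapp] at hf0
    have hgeq : (0 : Polynomial ℚ)
        = ∑ j ∈ Finset.range (n + 1), ∑ s ∈ Finset.Icc 1 A, C (EEof n A f j s) * bb n A j s := by
      rw [reindex n A (fun j s => C (EEof n A f j s) * bb n A j s)]
      rw [← hf0]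
      exact Finset.sum_congr rfl fun p _ => by rw [EEof_apply n A f p]
    rw [Submodule.mem_bot]
    funext p
    have hkey := keyExt n A (EEof n A f) 0 hgeq p.1 ((p.2 : ℕ) + 1)
      (by omega) (by omega) (by omega)
    rw [map_zero, zero_mul, map_zero] at hkey
    have hPp := Pp_ne_zero n p.1 (by omega)
    have h0 : EEof n A f p.1 ((p.2 : ℕ) + 1) = 0 := by
      rcases mul_eq_zero.mp hkey.symm with h | h
      · exact h
      · exact absurd h (pow_ne_zero A hPp)
    rw [EEof_apply n A f p] at h0
    exact h0
  haveI : FiniteDimensional ℚ (Polynomial.degreeLT ℚ N) :=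
    LinearEquiv.finiteDimensional (Polynomial.degreeLTEquiv ℚ N).symm
  have hrank : Module.finrank ℚ ((Fin (n + 1) × Fin A) → ℚ)
      = Module.finrank ℚ (Polynomial.degreeLT ℚ N) := by
    rw [Module.finrank_fintype_fun_eq_card, Fintype.card_prod, Fintype.card_fin,
      Fintype.card_fin, (Polynomial.degreeLTEquiv ℚ N).finrank_eq,
      Module.finrank_fintype_fun_eq_card, Fintype.card_fin, hN, Nat.mul_comm]
  have hsurj := (LinearMap.injective_iff_surjective_of_finrank_eq_finrank hrank).mp hinj
  have hXmem : ((X : Polynomial ℚ) ^ r) ∈ Polynomial.degreeLT ℚ N := by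
    rw [Polynomial.mem_degreeLT, Polynomial.degree_X_pow]
    exact_mod_cast hr
  obtain ⟨f, hf⟩ := hsurj ⟨(X : Polynomial ℚ) ^ r, hXmem⟩
  have hf' : ((L f : Polynomial.degreeLT ℚ N) : Polynomial ℚ) = (X : Polynomial ℚ) ^ r := by
    rw [hf]
  rw [hLapp] at hf'
  refine ⟨EEof n A f, ?_⟩
  rw [reindex n A (fun j s => C (EEof n A f j s) * bb n A j s), ← hf']
  exact Finset.sum_congr rfl fun p _ => by rw [EEof_apply n A f p]

end DepthOne

open Polynomial in
/-- Depth-1 partial fraction integrality: `n!^A k^r / (k)_{n+1}^A` has a partial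
fraction expansion with coefficients `E_{j,s}` such that `d_n^{A−s} E_{j,s} ∈ ℤ`. -/
theorem depth_one_partial_fractions (n A r : ℕ) (hA : 1 ≤ A)
    (hr : r ≤ A * (n + 1) - 1) :
    ∃ E : ℕ → ℕ → ℚ,
      (∀ k : ℚ, (∀ j : ℕ, j ≤ n → k + j ≠ 0) →
        (Nat.factorial n : ℚ) ^ A * k ^ r / (∏ t ∈ Finset.range (n + 1), (k + t)) ^ A =
          ∑ j ∈ Finset.range (n + 1), ∑ s ∈ Finset.Icc 1 A, E j s / (k + j) ^ s) ∧
      ∀ j s : ℕ, j ≤ n → 1 ≤ s → s ≤ A →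
        ∃ m : ℤ, ((dlcm n : ℚ)) ^ (A - s) * E j s = m := by
  classical
  have hpos : 1 ≤ A * (n + 1) := Nat.one_le_iff_ne_zero.mpr (by positivity)
  have hrN : r < A * (n + 1) := by omega
  obtain ⟨E0, hE0⟩ := DepthOne.exists_decomp n A r hA hrN
  set E : ℕ → ℕ → ℚ := fun j s => (n.factorial : ℚ) ^ A * E0 j s with hEdef
  have hmaster : (C ((n.factorial : ℚ) ^ A) * X ^ r : Polynomial ℚ)
      = ∑ j ∈ Finset.range (n + 1), ∑ s ∈ Finset.Icc 1 A,
          C (E j s) * DepthOne.bb n A j s := by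
    rw [hE0, Finset.mul_sum]
    refine Finset.sum_congr rfl fun j _ => ?_
    rw [Finset.mul_sum]
    refine Finset.sum_congr rfl fun s _ => ?_
    simp only [hEdef]
    rw [map_mul, mul_assoc]
  refine ⟨E, ?_, ?_⟩
  · intro k hk
    have hknz : ∀ t ∈ Finset.range (n + 1), k + (t : ℚ) ≠ 0 := fun t ht =>
      hk t (Nat.lt_succ_iff.mp (Finset.mem_range.mp ht))
    have hQ : (∏ t ∈ Finset.range (n + 1), (k + (t : ℚ))) ≠ 0 :=
      Finset.prod_ne_zero_iff.mpr hknz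
    have heval := congrArg (Polynomial.eval k) hmaster
    simp only [Polynomial.eval_mul, Polynomial.eval_pow, Polynomial.eval_finset_sum,
      DepthOne.bb, Polynomial.eval_prod, Polynomial.eval_add, Polynomial.eval_X,
      Polynomial.eval_C] at heval
    rw [div_eq_iff (pow_ne_zero A hQ), heval, Finset.sum_mul]
    refine Finset.sum_congr rfl fun j hjm => ?_
    rw [Finset.sum_mul]
    refine Finset.sum_congr rfl fun s hs => ?_
    have hkj : k + (j : ℚ) ≠ 0 := hknz j hjm
    have hPe : (∏ t ∈ (Finset.range (n + 1)).erase j, (k + (t : ℚ)) ^ A) ≠ 0 := by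
      refine Finset.prod_ne_zero_iff.mpr fun t ht => ?_
      exact pow_ne_zero A (hknz t (Finset.mem_of_mem_erase ht))
    have hQA : (∏ t ∈ Finset.range (n + 1), (k + (t : ℚ))) ^ A
        = (k + (j : ℚ)) ^ A * ∏ t ∈ (Finset.range (n + 1)).erase j, (k + (t : ℚ)) ^ A := by
      rw [← Finset.prod_pow]
      exact (Finset.mul_prod_erase _ _ hjm).symm
    have hsA : s ≤ A := (Finset.mem_Icc.mp hs).2
    have hpow : (k + (j : ℚ)) ^ A = (k + (j : ℚ)) ^ s * (k + (j : ℚ)) ^ (A - s) := by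
      rw [← pow_add]
      congr 1
      omega
    rw [hQA, hpow]
    field_simp
  · intro j s hj hs1 hsA
    exact DepthOne.final_int n A r E hmaster j s hj hs1 hsA
end
end

section
/- Symmetry of partial fraction coefficients: let P ∈ ℚ[X₁,…,X_p] have degree ≤ A(n+1)−1 in each variable and let C[s₁,…,s_p; j₁,…,j_p] be the partial fraction coefficients of P/((X₁)_{n+1}^A⋯(X_p)_{n+1}^A). Then P satisfies P(X₁,…,−X_i−n,…,X_p) = (−1)^{A(n+1)+1} P(X₁,…,X_p) for all i and P(X_{σ(1)},…,X_{σ(p)}) = sgn(σ) P(X₁,…,X_p) for all σ ∈ S_p if and only if C[s₁,…,s_p; j₁,…,j_{i−1}, n−j_i, j_{i+1},…,j_p] = (−1)^{s_i+1} C[s₁,…,s_p; j₁,…,j_p] for all i and C[s_{γ(1)},…,s_{γ(p)}; j_{γ(1)},…,j_{γ(p)}] = sgn(γ) C[s₁,…,s_p; j₁,…,j_p] for all γ ∈ S_p. -/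
open Finset Filter Topology

private lemma tendsto_t : Tendsto (fun m : ℕ => 1 / ((m : ℝ) + 2)) atTop (𝓝 0) := by
  have h := (tendsto_one_div_add_atTop_nhds_zero_nat (𝕜 := ℝ)).comp (tendsto_add_atTop_nat 1)
  convert h using 2 with m
  simp [Function.comp]
  ring_nf

lemma one_var_unique (n A : ℕ) (a : ℕ → ℕ → ℚ)
    (h : ∀ x : ℚ, (∀ j : ℕ, j ≤ n → x + j ≠ 0) →
      ∑ s ∈ Finset.Icc 1 A, ∑ j ∈ Finset.range (n + 1), a s j / (x + j) ^ s = 0) :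
    ∀ s ∈ Finset.Icc 1 A, ∀ j ∈ Finset.range (n + 1), a s j = 0 := by
  have key : ∀ d : ℕ, ∀ s, s ∈ Finset.Icc 1 A → A - s = d →
      ∀ j ∈ Finset.range (n + 1), a s j = 0 := by
    intro d
    induction d using Nat.strong_induction_on with
    | _ d IH =>
      intro s hs hd j hj
      rw [Finset.mem_Icc] at hs
      rw [Finset.mem_range] at hj
      -- the rational sampling points
      set xq : ℕ → ℚ := fun m => 1 / ((m : ℚ) + 2) - (j : ℚ) with hxq
      have hpos : ∀ m : ℕ, 0 < 1 / ((m : ℚ) + 2) := by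
        intro m; positivity
      have hlt1 : ∀ m : ℕ, 1 / ((m : ℚ) + 2) < 1 := by
        intro m
        rw [div_lt_one (by positivity)]
        have : (0 : ℚ) ≤ (m : ℚ) := Nat.cast_nonneg m
        linarith
      have hvalid : ∀ m : ℕ, ∀ t : ℕ, t ≤ n → xq m + (t : ℚ) ≠ 0 := by
        intro m t _ hzero
        have h1 : (j : ℚ) - t = 1 / ((m : ℚ) + 2) := by
          rw [hxq] at hzero; linarith
        rcases lt_trichotomy t j with hc | hc | hc
        · have : t + 1 ≤ j := hc
          have : ((t : ℚ) + 1) ≤ (j : ℚ) := by exact_mod_cast this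
          have := hlt1 m
          linarith
        · subst hc
          have := hpos m
          simp at h1
          linarith
        · have : (j : ℚ) < t := by exact_mod_cast hc
          have := hpos m
          linarith
      -- the real sequence
      set t : ℕ → ℝ := fun m => 1 / ((m : ℝ) + 2) with ht
      have htpos : ∀ m, 0 < t m := fun m => by positivity
      have htlim : Tendsto t atTop (𝓝 0) := tendsto_t
      set G : ℕ → ℝ := fun m => ∑ s' ∈ Finset.Icc 1 A, ∑ j' ∈ Finset.range (n + 1),
        (a s' j' : ℝ) * t m ^ s / (t m + (j' : ℝ) - (j : ℝ)) ^ s' with hG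
      have hG0 : ∀ m, G m = 0 := by
        intro m
        have h0 := h (xq m) (hvalid m)
        have hcast : ((xq m : ℚ) : ℝ) = t m - (j : ℝ) := by
          rw [hxq, ht]; push_cast; ring
        have h0' : ∑ s' ∈ Finset.Icc 1 A, ∑ j' ∈ Finset.range (n + 1),
            (a s' j' : ℝ) / ((t m + (j' : ℝ) - (j : ℝ))) ^ s' = 0 := by
          have hc2 : ∑ s' ∈ Finset.Icc 1 A, ∑ j' ∈ Finset.range (n + 1),
              (a s' j' : ℝ) / (((xq m : ℚ) : ℝ) + (j' : ℝ)) ^ s' = 0 := by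
            exact_mod_cast congrArg (fun q : ℚ => (q : ℝ)) h0
          rw [← hc2]
          apply Finset.sum_congr rfl
          intro s' _
          apply Finset.sum_congr rfl
          intro j' _
          rw [hcast]
          ring_nf
        rw [hG]
        calc ∑ s' ∈ Finset.Icc 1 A, ∑ j' ∈ Finset.range (n + 1),
              (a s' j' : ℝ) * t m ^ s / (t m + (j' : ℝ) - (j : ℝ)) ^ s'
            = t m ^ s * ∑ s' ∈ Finset.Icc 1 A, ∑ j' ∈ Finset.range (n + 1),
              (a s' j' : ℝ) / (t m + (j' : ℝ) - (j : ℝ)) ^ s' := by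
              rw [Finset.mul_sum]
              apply Finset.sum_congr rfl
              intro s' _
              rw [Finset.mul_sum]
              apply Finset.sum_congr rfl
              intro j' _
              ring
          _ = 0 := by rw [h0']; ring
      -- limits
      have hlim : Tendsto G atTop (𝓝 ((a s j : ℝ))) := by
        have : (a s j : ℝ) = ∑ s' ∈ Finset.Icc 1 A, ∑ j' ∈ Finset.range (n + 1),
            (if s' = s ∧ j' = j then (a s j : ℝ) else 0) := by
          rw [Finset.sum_eq_single s, Finset.sum_eq_single j]
          · simp
          · intro b _ hb; simp [hb]
          · intro hjmem; exact absurd (Finset.mem_range.2 (by omega)) hjmem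
          · intro b _ hb
            apply Finset.sum_eq_zero
            intro j' _
            simp [hb]
          · intro hsmem; exact absurd (Finset.mem_Icc.2 ⟨hs.1, hs.2⟩) hsmem
        rw [this, hG]
        apply tendsto_finset_sum
        intro s' hs'
        apply tendsto_finset_sum
        intro j' hj'
        rw [Finset.mem_Icc] at hs'
        rw [Finset.mem_range] at hj'
        by_cases hjj : j' = j
        · subst hjj
          by_cases hss : s' = s
          · subst hss
            simp only [and_self, if_true]
            have heq : ∀ m, (a s' j' : ℝ) * t m ^ s' / (t m + (j' : ℝ) - (j' : ℝ)) ^ s'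
                = (a s' j' : ℝ) := by
              intro m
              have : t m + (j' : ℝ) - (j' : ℝ) = t m := by ring
              rw [this]
              rw [mul_div_assoc, div_self (pow_ne_zero _ (htpos m).ne'), mul_one]
            simp only [heq]
            exact tendsto_const_nhds
          · rcases lt_or_gt_of_ne hss with hlt | hgt
            · -- s' < s : term = a * t^(s-s') → 0
              simp only [hss, false_and, if_false]
              have heq : ∀ m, (a s' j' : ℝ) * t m ^ s / (t m + (j' : ℝ) - (j' : ℝ)) ^ s'
                  = (a s' j' : ℝ) * t m ^ (s - s') := by
                intro m
                have h1 : t m + (j' : ℝ) - (j' : ℝ) = t m := by ring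
                rw [h1]
                have h2 : t m ^ s = t m ^ (s - s') * t m ^ s' := by
                  rw [← pow_add]; congr 1; omega
                rw [h2]
                rw [mul_div_assoc, mul_div_assoc, div_self (pow_ne_zero _ (htpos m).ne')]
                ring
              simp only [heq]
              have : Tendsto (fun m => t m ^ (s - s')) atTop (𝓝 0) := by
                have := htlim.pow (s - s')
                simpa [zero_pow (by omega : s - s' ≠ 0)] using this
              simpa using this.const_mul _
            · -- s' > s : coefficient is zero by IH
              have haz : a s' j' = 0 := by
                apply IH (A - s') (by omega) s' (Finset.mem_Icc.2 ⟨by omega, hs'.2⟩) rfl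
                exact Finset.mem_range.2 hj'
              simp [haz, hss]
        · -- j' ≠ j
          simp only [hjj, and_false, if_false]
          have hc : (j' : ℝ) - (j : ℝ) ≠ 0 := by
            intro h0
            apply hjj
            have : (j' : ℝ) = (j : ℝ) := by linarith
            exact_mod_cast this
          have hnum : Tendsto (fun m => (a s' j' : ℝ) * t m ^ s) atTop (𝓝 0) := by
            have : Tendsto (fun m => t m ^ s) atTop (𝓝 0) := by
              have := htlim.pow s
              simpa [zero_pow (by omega : s ≠ 0)] using this
            simpa using this.const_mul ((a s' j' : ℝ))
          have hden : Tendsto (fun m => (t m + (j' : ℝ) - (j : ℝ)) ^ s') atTop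
              (𝓝 (((j' : ℝ) - (j : ℝ)) ^ s')) := by
            have h1 : Tendsto (fun m => t m + (j' : ℝ) - (j : ℝ)) atTop
                (𝓝 ((j' : ℝ) - (j : ℝ))) := by
              have h2 := (htlim.add_const ((j' : ℝ))).sub_const ((j : ℝ))
              simpa [ht, one_div] using h2
            exact h1.pow s'
          have := hnum.div hden (pow_ne_zero _ hc)
          rw [zero_div] at this; exact this
      have hzero : Tendsto G atTop (𝓝 (0 : ℝ)) := by
        have hfe : G = fun _ => (0 : ℝ) := funext hG0
        rw [hfe]
        exact tendsto_const_nhds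
      have hfin : (a s j : ℝ) = 0 := tendsto_nhds_unique hlim hzero
      exact_mod_cast hfin
  intro s hs j hj
  exact key (A - s) s hs rfl j hj



lemma sum_piFinset_succ {p : ℕ} {β : Type*} [DecidableEq β] (T : Finset β)
    {M : Type*} [AddCommMonoid M] (F : (Fin (p + 1) → β) → M) :
    ∑ f ∈ Fintype.piFinset (fun _ : Fin (p + 1) => T), F f
      = ∑ x ∈ T, ∑ g ∈ Fintype.piFinset (fun _ : Fin p => T), F (Fin.cons x g) := by
  classical
  rw [← Finset.sum_product']
  apply Finset.sum_nbij' (i := fun f => ((f 0, Fin.tail f) : β × (Fin p → β)))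
    (j := fun z => Fin.cons z.1 z.2)
  · intro f hf
    simp only [Fintype.mem_piFinset] at hf
    simp only [Finset.mem_product, Fintype.mem_piFinset]
    exact ⟨hf 0, fun i => hf i.succ⟩
  · intro z hz
    simp only [Finset.mem_product, Fintype.mem_piFinset] at hz
    simp only [Fintype.mem_piFinset]
    intro i
    refine Fin.cases ?_ ?_ i
    · simpa using hz.1
    · intro i'; simpa using hz.2 i'
  · intro f _; exact Fin.cons_self_tail f
  · intro z _; simp
  · intro f _; rw [Fin.cons_self_tail]



lemma multi_unique (n A : ℕ) : ∀ (p : ℕ) (D : (Fin p → ℕ) → (Fin p → ℕ) → ℚ),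
    (∀ k : Fin p → ℚ, (∀ i, ∀ t : ℕ, t ≤ n → k i + t ≠ 0) →
      ∑ s ∈ Fintype.piFinset (fun _ : Fin p => Finset.Icc 1 A),
        ∑ j ∈ Fintype.piFinset (fun _ : Fin p => Finset.range (n + 1)),
          D s j / ∏ i, (k i + j i) ^ s i = 0) →
    ∀ s j : Fin p → ℕ, (∀ i, s i ∈ Finset.Icc 1 A) → (∀ i, j i ∈ Finset.range (n + 1)) →
      D s j = 0 := by
  intro p
  induction p with
  | zero =>
    intro D hD s j _ _
    have hk : ∀ i : Fin 0, ∀ t : ℕ, t ≤ n → (fun _ : Fin 0 => (1 : ℚ)) i + t ≠ 0 :=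
      fun i => i.elim0
    have h0 := hD (fun _ => 1) hk
    simp [Fintype.piFinset_of_isEmpty, Finset.univ_unique] at h0
    convert h0 using 2 <;> exact Subsingleton.elim _ _
  | succ p IH =>
    intro D hD s j hsmem hjmem
    have inner : ∀ krest : Fin p → ℚ, (∀ i, ∀ t : ℕ, t ≤ n → krest i + t ≠ 0) →
        ∀ s0 ∈ Finset.Icc 1 A, ∀ j0 ∈ Finset.range (n + 1),
        (∑ srest ∈ Fintype.piFinset (fun _ : Fin p => Finset.Icc 1 A),
          ∑ jrest ∈ Fintype.piFinset (fun _ : Fin p => Finset.range (n + 1)),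
            D (Fin.cons s0 srest) (Fin.cons j0 jrest) /
              ∏ i, (krest i + jrest i) ^ srest i) = 0 := by
      intro krest hkrest
      apply one_var_unique n A
      intro x hx
      have hk : ∀ i : Fin (p + 1), ∀ t : ℕ, t ≤ n →
          (Fin.cons x krest : Fin (p + 1) → ℚ) i + (t : ℚ) ≠ 0 := by
        intro i
        refine Fin.cases ?_ ?_ i
        · simpa using hx
        · intro i'; simpa using hkrest i'
      have h0 := hD (Fin.cons x krest) hk
      simp only [sum_piFinset_succ, Fin.prod_univ_succ, Fin.cons_zero, Fin.cons_succ] at h0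
      refine Eq.trans ?_ h0
      apply Finset.sum_congr rfl
      intro s0 _
      conv_rhs => rw [Finset.sum_comm]
      apply Finset.sum_congr rfl
      intro j0 _
      rw [Finset.sum_div]
      apply Finset.sum_congr rfl
      intro srest _
      rw [Finset.sum_div]
      apply Finset.sum_congr rfl
      intro jrest _
      rw [div_div]
      ring_nf
    have hD' : ∀ krest : Fin p → ℚ, (∀ i, ∀ t : ℕ, t ≤ n → krest i + t ≠ 0) →
        ∑ s' ∈ Fintype.piFinset (fun _ : Fin p => Finset.Icc 1 A),
          ∑ j' ∈ Fintype.piFinset (fun _ : Fin p => Finset.range (n + 1)),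
            (fun s' j' => D (Fin.cons (s 0) s') (Fin.cons (j 0) j')) s' j' /
              ∏ i, (krest i + j' i) ^ s' i = 0 := by
      intro krest hkrest
      exact inner krest hkrest (s 0) (hsmem 0) (j 0) (hjmem 0)
    have := IH (fun s' j' => D (Fin.cons (s 0) s') (Fin.cons (j 0) j')) hD'
      (Fin.tail s) (Fin.tail j) (fun i => hsmem i.succ) (fun i => hjmem i.succ)
    simpa [Fin.cons_self_tail] using this



lemma valid_set_infinite (n : ℕ) : {z : ℚ | ∀ t : ℕ, t ≤ n → z + t ≠ 0}.Infinite := by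
  have hsub : {z : ℚ | ∀ t : ℕ, t ≤ n → z + t ≠ 0}ᶜ ⊆
      (fun t : ℕ => -(t : ℚ)) '' (Set.Iic n) := by
    intro z hz
    simp only [Set.mem_compl_iff, Set.mem_setOf_eq, not_forall] at hz
    obtain ⟨t, ht, hzt⟩ := hz
    rw [not_ne_iff] at hzt
    exact ⟨t, ht, show -(t : ℚ) = z by linarith⟩
  have hfin : {z : ℚ | ∀ t : ℕ, t ≤ n → z + t ≠ 0}ᶜ.Finite :=
    Set.Finite.subset ((Set.finite_Iic n).image _) hsub
  have := hfin.infinite_compl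
  rwa [compl_compl] at this

lemma mv_vanish (n : ℕ) : ∀ (p : ℕ) (Q : MvPolynomial (Fin p) ℚ),
    (∀ k : Fin p → ℚ, (∀ i, ∀ t : ℕ, t ≤ n → k i + t ≠ 0) → MvPolynomial.eval k Q = 0) →
    ∀ x : Fin p → ℚ, MvPolynomial.eval x Q = 0 := by
  intro p
  induction p with
  | zero =>
    intro Q hQ x
    have h0 := hQ (fun _ => 1) (fun i => i.elim0)
    have hx : x = fun _ => 1 := Subsingleton.elim _ _
    rw [hx]
    exact h0
  | succ p IH =>
    intro Q hQ x
    have step1 : ∀ x0 : ℚ, ∀ y : Fin p → ℚ, (∀ i, ∀ t : ℕ, t ≤ n → y i + t ≠ 0) →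
        MvPolynomial.eval (Fin.cons x0 y : Fin (p + 1) → ℚ) Q = 0 := by
      intro x0 y hy
      set q : Polynomial ℚ :=
        Polynomial.map (MvPolynomial.eval y) (MvPolynomial.finSuccEquiv ℚ p Q) with hq
      have hroots : {z : ℚ | ∀ t : ℕ, t ≤ n → z + t ≠ 0} ⊆ {z : ℚ | q.IsRoot z} := by
        intro z hz
        have hk : ∀ i : Fin (p + 1), ∀ t : ℕ, t ≤ n →
            (Fin.cons z y : Fin (p + 1) → ℚ) i + (t : ℚ) ≠ 0 := by
          intro i
          refine Fin.cases ?_ ?_ i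
          · simpa using hz
          · intro i'; simpa using hy i'
        have h0 := hQ (Fin.cons z y) hk
        rw [MvPolynomial.eval_eq_eval_mv_eval'] at h0
        exact h0
      have hq0 : q = 0 :=
        Polynomial.eq_zero_of_infinite_isRoot q ((valid_set_infinite n).mono hroots)
      rw [MvPolynomial.eval_eq_eval_mv_eval', ← hq, hq0]
      simp
    have step2 : ∀ x0 : ℚ, ∀ y : Fin p → ℚ,
        MvPolynomial.eval (Fin.cons x0 y : Fin (p + 1) → ℚ) Q = 0 := by
      intro x0
      set Q' : MvPolynomial (Fin p) ℚ :=
        Polynomial.eval (MvPolynomial.C x0) (MvPolynomial.finSuccEquiv ℚ p Q) with hQ'def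
      have key : ∀ y : Fin p → ℚ,
          MvPolynomial.eval y Q' = MvPolynomial.eval (Fin.cons x0 y : Fin (p + 1) → ℚ) Q := by
        intro y
        rw [MvPolynomial.eval_eq_eval_mv_eval', hQ'def]
        rw [Polynomial.eval_map]
        rw [Polynomial.eval, Polynomial.hom_eval₂]
        simp
      have hQ'vanish : ∀ y : Fin p → ℚ, (∀ i, ∀ t : ℕ, t ≤ n → y i + t ≠ 0) →
          MvPolynomial.eval y Q' = 0 := by
        intro y hy
        rw [key]
        exact step1 x0 y hy
      intro y
      rw [← key]
      exact IH Q' hQ'vanish y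
    rw [← Fin.cons_self_tail x]
    exact step2 (x 0) (Fin.tail x)



-- the common denominator
def PFden (n A : ℕ) {p : ℕ} (k : Fin p → ℚ) : ℚ :=
  ∏ i, (∏ t ∈ Finset.range (n + 1), (k i + t)) ^ A

-- the partial fraction sum
def PFsum (n A : ℕ) {p : ℕ} (C : (Fin p → ℕ) → (Fin p → ℕ) → ℚ) (k : Fin p → ℚ) : ℚ :=
  ∑ s ∈ Fintype.piFinset (fun _ : Fin p => Finset.Icc 1 A),
    ∑ j ∈ Fintype.piFinset (fun _ : Fin p => Finset.range (n + 1)),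
      C s j / ∏ i, (k i + j i) ^ s i

lemma prod_point {p : ℕ} (f g : Fin p → ℚ) (i : Fin p) (c : ℚ)
    (hoff : ∀ l, l ≠ i → f l = g l) (hi : f i = c * g i) :
    ∏ l, f l = c * ∏ l, g l := by
  rw [Finset.prod_eq_mul_prod_sdiff_singleton_of_mem (Finset.mem_univ i) f,
    Finset.prod_eq_mul_prod_sdiff_singleton_of_mem (Finset.mem_univ i) g, hi]
  rw [Finset.prod_congr rfl (fun l hl => hoff l (by
    simp only [Finset.mem_sdiff, Finset.mem_singleton] at hl; exact hl.2))]
  ring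

lemma div_neg_pow (e : ℕ) (a x : ℚ) : a / ((-1) ^ e * x) = ((-1) ^ e * a) / x := by
  rcases Nat.even_or_odd e with he | he
  · rw [he.neg_one_pow]; simp
  · rw [he.neg_one_pow]; rw [neg_one_mul, neg_one_mul, div_neg, neg_div]

lemma neg_one_pow_sq (e : ℕ) : ((-1 : ℚ) ^ e) * ((-1 : ℚ) ^ e) = 1 := by
  rw [← mul_pow]; norm_num

-- denominator under reflection
lemma PFden_refl (n A : ℕ) {p : ℕ} (k : Fin p → ℚ) (i : Fin p) :
    PFden n A (Function.update k i (-k i - n))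
      = (-1) ^ (A * (n + 1)) * PFden n A k := by
  unfold PFden
  apply prod_point _ _ i
  · intro l hl
    rw [Function.update_of_ne hl]
  · rw [Function.update_self]
    have h1 : ∏ t ∈ Finset.range (n + 1), (-k i - (n : ℚ) + t)
        = (-1) ^ (n + 1) * ∏ t ∈ Finset.range (n + 1), (k i + t) := by
      rw [← Finset.prod_range_reflect (fun t => (-k i - (n : ℚ) + t)) (n + 1)]
      rw [show ((-1 : ℚ) ^ (n + 1)) * ∏ t ∈ Finset.range (n + 1), (k i + t)
        = ∏ t ∈ Finset.range (n + 1), (-1) * (k i + t) by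
          rw [Finset.prod_mul_distrib]; simp]
      apply Finset.prod_congr rfl
      intro t ht
      rw [Finset.mem_range] at ht
      have : ((n + 1 - 1 - t : ℕ) : ℚ) = (n : ℚ) - t := by
        have : n + 1 - 1 - t = n - t := rfl
        rw [this, Nat.cast_sub (by omega)]
      rw [this]
      ring
    rw [h1, mul_pow, ← pow_mul, mul_comm (n+1) A]

-- denominator under permutation
lemma PFden_perm (n A : ℕ) {p : ℕ} (k : Fin p → ℚ) (γ : Equiv.Perm (Fin p)) :
    PFden n A (fun l => k (γ l)) = PFden n A k := by
  unfold PFden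
  exact Equiv.prod_comp γ (fun l => (∏ t ∈ Finset.range (n + 1), (k l + t)) ^ A)

-- term product under reflection
lemma prod_term_refl (n : ℕ) {p : ℕ} (k : Fin p → ℚ) (i : Fin p) (s j : Fin p → ℕ)
    (hj : j i ≤ n) :
    ∏ l, (Function.update k i (-k i - n) l + j l) ^ s l
      = (-1) ^ s i * ∏ l, (k l + (Function.update j i (n - j i) l : ℕ)) ^ s l := by
  apply prod_point _ _ i
  · intro l hl
    rw [Function.update_of_ne hl, Function.update_of_ne hl]
  · rw [Function.update_self, Function.update_self]
    have hcast : ((n - j i : ℕ) : ℚ) = (n : ℚ) - j i := Nat.cast_sub hj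
    rw [hcast]
    rw [show -k i - (n : ℚ) + j i = -(k i + ((n : ℚ) - j i)) by ring]
    rw [neg_pow]

-- reindexing sum over piFinset by the reflection involution
lemma sum_update_reindex {p : ℕ} (n : ℕ) (i : Fin p) (F : (Fin p → ℕ) → ℚ) :
    ∑ j ∈ Fintype.piFinset (fun _ : Fin p => Finset.range (n + 1)), F j
      = ∑ j ∈ Fintype.piFinset (fun _ : Fin p => Finset.range (n + 1)),
          F (Function.update j i (n - j i)) := by
  apply Finset.sum_nbij' (i := fun j => Function.update j i (n - j i))
    (j := fun j => Function.update j i (n - j i))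
  · intro a ha
    simp only [Fintype.mem_piFinset, Finset.mem_range] at ha ⊢
    intro l
    rcases eq_or_ne l i with rfl | hl
    · rw [Function.update_self]; omega
    · rw [Function.update_of_ne hl]; exact ha l
  · intro a ha
    simp only [Fintype.mem_piFinset, Finset.mem_range] at ha ⊢
    intro l
    rcases eq_or_ne l i with rfl | hl
    · rw [Function.update_self]; omega
    · rw [Function.update_of_ne hl]; exact ha l
  · intro a ha
    simp only [Fintype.mem_piFinset, Finset.mem_range] at ha
    funext l
    rcases eq_or_ne l i with rfl | hl
    · rw [Function.update_self, Function.update_self]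
      have := ha l
      omega
    · rw [Function.update_of_ne hl, Function.update_of_ne hl]
  · intro a ha
    simp only [Fintype.mem_piFinset, Finset.mem_range] at ha
    funext l
    rcases eq_or_ne l i with rfl | hl
    · rw [Function.update_self, Function.update_self]
      have := ha l
      omega
    · rw [Function.update_of_ne hl, Function.update_of_ne hl]
  · intro a ha
    simp only [Fintype.mem_piFinset, Finset.mem_range] at ha
    congr 1
    funext l
    rcases eq_or_ne l i with rfl | hl
    · rw [Function.update_self, Function.update_self]
      have := ha l
      omega
    · rw [Function.update_of_ne hl, Function.update_of_ne hl]

-- reindexing sum over piFinset by composition with a permutation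
lemma sum_comp_reindex {p : ℕ} {β : Type*} [DecidableEq β] (T : Finset β)
    (γ : Equiv.Perm (Fin p)) (F : (Fin p → β) → ℚ) :
    ∑ f ∈ Fintype.piFinset (fun _ : Fin p => T), F f
      = ∑ f ∈ Fintype.piFinset (fun _ : Fin p => T), F (f ∘ γ) := by
  apply Finset.sum_nbij' (i := fun f => f ∘ γ.symm) (j := fun f => f ∘ γ)
  · intro a ha
    simp only [Fintype.mem_piFinset] at ha ⊢
    intro l; exact ha _
  · intro a ha
    simp only [Fintype.mem_piFinset] at ha ⊢
    intro l; exact ha _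
  · intro a _; funext l; simp [Function.comp]
  · intro a _; funext l; simp [Function.comp]
  · intro a _; congr 1; funext l; simp [Function.comp]

lemma PFden_ne (n A : ℕ) {p : ℕ} (k : Fin p → ℚ)
    (hk : ∀ i, ∀ t : ℕ, t ≤ n → k i + t ≠ 0) : PFden n A k ≠ 0 := by
  unfold PFden
  rw [Finset.prod_ne_zero_iff]
  intro i _
  apply pow_ne_zero
  rw [Finset.prod_ne_zero_iff]
  intro t ht
  exact hk i t (by rw [Finset.mem_range] at ht; omega)

lemma valid_update (n : ℕ) {p : ℕ} (k : Fin p → ℚ) (i : Fin p)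
    (hk : ∀ l, ∀ t : ℕ, t ≤ n → k l + t ≠ 0) :
    ∀ l, ∀ t : ℕ, t ≤ n → Function.update k i (-k i - n) l + t ≠ 0 := by
  intro l t ht
  rcases eq_or_ne l i with rfl | hl
  · rw [Function.update_self]
    have h2 := hk l (n - t) (by omega)
    have hc : ((n - t : ℕ) : ℚ) = (n : ℚ) - t := Nat.cast_sub ht
    rw [hc] at h2
    intro h0
    apply h2
    linarith
  · rw [Function.update_of_ne hl]; exact hk l t ht

lemma update_update {p n : ℕ} (j : Fin p → ℕ) (i : Fin p) (hj : j i ≤ n) :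
    Function.update (Function.update j i (n - j i)) i
      (n - Function.update j i (n - j i) i) = j := by
  funext l
  rcases eq_or_ne l i with rfl | hl
  · simp only [Function.update_self]
    omega
  · rw [Function.update_of_ne hl, Function.update_of_ne hl]

lemma SS_refl (n A : ℕ) {p : ℕ} (C : (Fin p → ℕ) → (Fin p → ℕ) → ℚ)
    (k : Fin p → ℚ) (i : Fin p) :
    PFsum n A C (Function.update k i (-k i - n))
      = ∑ s ∈ Fintype.piFinset (fun _ : Fin p => Finset.Icc 1 A),
          ∑ j ∈ Fintype.piFinset (fun _ : Fin p => Finset.range (n + 1)),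
            ((-1) ^ s i * C s (Function.update j i (n - j i)))
              / ∏ l, (k l + (j l : ℚ)) ^ s l := by
  unfold PFsum
  apply Finset.sum_congr rfl
  intro s _
  conv_rhs => rw [sum_update_reindex n i (fun j =>
    ((-1 : ℚ) ^ s i * C s (Function.update j i (n - j i)))
      / ∏ l, (k l + (j l : ℚ)) ^ s l)]
  apply Finset.sum_congr rfl
  intro j hj
  simp only [Fintype.mem_piFinset, Finset.mem_range] at hj
  have hji : j i ≤ n := by have := hj i; omega
  rw [prod_term_refl n k i s j hji, div_neg_pow]
  rw [update_update j i hji]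

lemma SS_perm (n A : ℕ) {p : ℕ} (C : (Fin p → ℕ) → (Fin p → ℕ) → ℚ)
    (k : Fin p → ℚ) (γ : Equiv.Perm (Fin p)) :
    PFsum n A C (fun l => k (γ l))
      = ∑ s ∈ Fintype.piFinset (fun _ : Fin p => Finset.Icc 1 A),
          ∑ j ∈ Fintype.piFinset (fun _ : Fin p => Finset.range (n + 1)),
            C (s ∘ γ) (j ∘ γ) / ∏ l, (k l + (j l : ℚ)) ^ s l := by
  unfold PFsum
  conv_rhs => rw [sum_comp_reindex (Finset.Icc 1 A) γ.symm (fun s =>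
    ∑ j ∈ Fintype.piFinset (fun _ : Fin p => Finset.range (n + 1)),
      C (s ∘ γ) (j ∘ γ) / ∏ l, (k l + (j l : ℚ)) ^ s l)]
  apply Finset.sum_congr rfl
  intro s _
  conv_rhs => rw [sum_comp_reindex (Finset.range (n + 1)) γ.symm (fun j =>
    C ((s ∘ γ.symm) ∘ γ) (j ∘ γ) / ∏ l, (k l + (j l : ℚ)) ^ (s ∘ γ.symm) l)]
  apply Finset.sum_congr rfl
  intro j _
  have hs : (s ∘ ⇑γ.symm) ∘ ⇑γ = s := by funext l; simp [Function.comp]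
  have hjj : (j ∘ ⇑γ.symm) ∘ ⇑γ = j := by funext l; simp [Function.comp]
  rw [hs, hjj]
  congr 1
  rw [← Equiv.prod_comp γ (fun l => (k l + ((j ∘ ⇑γ.symm) l : ℚ)) ^ (s ∘ ⇑γ.symm) l)]
  apply Finset.prod_congr rfl
  intro l _
  simp [Function.comp]


lemma PFsum_def (n A : ℕ) {p : ℕ} (C : (Fin p → ℕ) → (Fin p → ℕ) → ℚ) (k : Fin p → ℚ) :
    PFsum n A C k = ∑ s ∈ Fintype.piFinset (fun _ : Fin p => Finset.Icc 1 A),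
      ∑ j ∈ Fintype.piFinset (fun _ : Fin p => Finset.range (n + 1)),
        C s j / ∏ i, (k i + j i) ^ s i := rfl

lemma eval_aeval_comp {p : ℕ} (y : Fin p → ℚ) (g : Fin p → MvPolynomial (Fin p) ℚ)
    (P : MvPolynomial (Fin p) ℚ) :
    MvPolynomial.eval y (MvPolynomial.aeval g P)
      = MvPolynomial.eval (fun l => MvPolynomial.eval y (g l)) P := by
  induction P using MvPolynomial.induction_on with
  | C a => simp
  | add q r hq hr => simp only [map_add, hq, hr]
  | mul_X q i h => simp only [map_mul, MvPolynomial.aeval_X, MvPolynomial.eval_X, h]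

lemma neg_one_pow_mul_succ (e : ℕ) (a : ℚ) : (-1 : ℚ) ^ e * ((-1) ^ (e + 1) * a) = -a := by
  rw [pow_succ, show ((-1 : ℚ) ^ e) * ((-1) ^ e * -1 * a)
    = (((-1 : ℚ) ^ e) * ((-1) ^ e)) * (-1 * a) by ring, neg_one_pow_sq]
  ring

open scoped BigOperators

/-- Symmetry of partial fraction coefficients: the polynomial `P` satisfies the
well-poised antisymmetry conditions if and only if its partial fraction
coefficients `C` satisfy the corresponding symmetry relations. -/
theorem partial_fraction_symmetry (p n A : ℕ) (hp : 1 ≤ p) (hA : 1 ≤ A)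
    (P : MvPolynomial (Fin p) ℚ)
    (hdeg : ∀ i : Fin p, P.degreeOf i ≤ A * (n + 1) - 1)
    (C : (Fin p → ℕ) → (Fin p → ℕ) → ℚ)
    (hC : ∀ k : Fin p → ℚ, (∀ i : Fin p, ∀ j : ℕ, j ≤ n → k i + j ≠ 0) →
      MvPolynomial.eval k P / ∏ i, (∏ t ∈ Finset.range (n + 1), (k i + t)) ^ A =
        ∑ s ∈ Fintype.piFinset (fun _ : Fin p => Finset.Icc 1 A),
          ∑ j ∈ Fintype.piFinset (fun _ : Fin p => Finset.range (n + 1)),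
            C s j / ∏ i, (k i + j i) ^ s i) :
    ((∀ i : Fin p, ∀ x : Fin p → ℚ,
        MvPolynomial.eval (Function.update x i (-x i - (n : ℚ))) P
          = (-1) ^ (A * (n + 1) + 1) * MvPolynomial.eval x P) ∧
      (∀ σ : Equiv.Perm (Fin p), ∀ x : Fin p → ℚ,
        MvPolynomial.eval (fun i => x (σ i)) P
          = ((Equiv.Perm.sign σ : ℤ) : ℚ) * MvPolynomial.eval x P))
    ↔
    ((∀ s j : Fin p → ℕ, (∀ i, 1 ≤ s i ∧ s i ≤ A ∧ j i ≤ n) → ∀ i : Fin p,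
        C s (Function.update j i (n - j i)) = (-1) ^ (s i + 1) * C s j) ∧
      (∀ s j : Fin p → ℕ, (∀ i, 1 ≤ s i ∧ s i ≤ A ∧ j i ≤ n) →
        ∀ γ : Equiv.Perm (Fin p),
          C (s ∘ γ) (j ∘ γ) = ((Equiv.Perm.sign γ : ℤ) : ℚ) * C s j)) := by
  classical
  have hvalidP : ∀ k : Fin p → ℚ, (∀ i : Fin p, ∀ t : ℕ, t ≤ n → k i + t ≠ 0) →
      MvPolynomial.eval k P = PFsum n A C k * PFden n A k := by
    intro k hk
    have hne := PFden_ne n A k hk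
    unfold PFden at hne
    have h1 := hC k hk
    rw [div_eq_iff hne] at h1
    unfold PFsum PFden
    exact h1
  constructor
  · rintro ⟨hrefl, hperm⟩
    constructor
    · -- reflection coefficients
      intro s j hbox i
      have hvan : ∀ k : Fin p → ℚ, (∀ l, ∀ t : ℕ, t ≤ n → k l + t ≠ 0) →
          ∑ s' ∈ Fintype.piFinset (fun _ : Fin p => Finset.Icc 1 A),
            ∑ j' ∈ Fintype.piFinset (fun _ : Fin p => Finset.range (n + 1)),
              (fun s' j' => (-1 : ℚ) ^ s' i * C s' (Function.update j' i (n - j' i)) + C s' j')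
                s' j' / ∏ l, (k l + j' l) ^ s' l = 0 := by
        intro k hk
        have hk' := valid_update n k i hk
        have e1 := hvalidP k hk
        have e2 := hvalidP _ hk'
        have e3 := hrefl i k
        have e4 := PFden_refl n A k i
        have e5 := SS_refl n A C k i
        have hd := PFden_ne n A k hk
        have hc0 : ((-1 : ℚ) ^ (A * (n + 1))) ≠ 0 := pow_ne_zero _ (by norm_num)
        have key : PFsum n A C (Function.update k i (-k i - n)) = - PFsum n A C k := by
          have h6 : PFsum n A C (Function.update k i (-k i - n)) * ((-1) ^ (A * (n + 1)) * PFden n A k)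
              = (-1 : ℚ) ^ (A * (n + 1) + 1) * (PFsum n A C k * PFden n A k) := by
            rw [← e4, ← e2, e3, e1]
          have h7 : (- PFsum n A C k) * ((-1 : ℚ) ^ (A * (n + 1)) * PFden n A k)
              = (-1 : ℚ) ^ (A * (n + 1) + 1) * (PFsum n A C k * PFden n A k) := by ring
          exact mul_right_cancel₀ (mul_ne_zero hc0 hd) (h6.trans h7.symm)
        simp only [add_div, Finset.sum_add_distrib]
        rw [← e5, ← PFsum_def n A C k, key]
        ring
      have hDzero := multi_unique n A p _ hvan
      have hmem_s : ∀ l, s l ∈ Finset.Icc 1 A :=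
        fun l => Finset.mem_Icc.2 ⟨(hbox l).1, (hbox l).2.1⟩
      have hmem_j : ∀ l, j l ∈ Finset.range (n + 1) :=
        fun l => Finset.mem_range.2 (by have := (hbox l).2.2; omega)
      have hD0 : (-1 : ℚ) ^ s i * C s (Function.update j i (n - j i)) + C s j = 0 :=
        hDzero s j hmem_s hmem_j
      have hsq := neg_one_pow_sq (s i)
      linear_combination ((-1 : ℚ) ^ (s i)) * hD0 - C s (Function.update j i (n - j i)) * hsq
    · -- permutation coefficients
      intro s j hbox γ
      have hvan : ∀ k : Fin p → ℚ, (∀ l, ∀ t : ℕ, t ≤ n → k l + t ≠ 0) →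
          ∑ s' ∈ Fintype.piFinset (fun _ : Fin p => Finset.Icc 1 A),
            ∑ j' ∈ Fintype.piFinset (fun _ : Fin p => Finset.range (n + 1)),
              (fun s' j' => C (s' ∘ γ) (j' ∘ γ) - ((Equiv.Perm.sign γ : ℤ) : ℚ) * C s' j')
                s' j' / ∏ l, (k l + j' l) ^ s' l = 0 := by
        intro k hk
        have hk' : ∀ l, ∀ t : ℕ, t ≤ n → k (γ l) + (t : ℚ) ≠ 0 := fun l t ht => hk (γ l) t ht
        have e1 := hvalidP k hk
        have e2 := hvalidP (fun l => k (γ l)) hk'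
        have e3 := hperm γ k
        have e4 := PFden_perm n A k γ
        have e5 := SS_perm n A C k γ
        have hd := PFden_ne n A k hk
        have key : PFsum n A C (fun l => k (γ l))
            = ((Equiv.Perm.sign γ : ℤ) : ℚ) * PFsum n A C k := by
          have h6 : PFsum n A C (fun l => k (γ l)) * PFden n A k
              = (((Equiv.Perm.sign γ : ℤ) : ℚ) * PFsum n A C k) * PFden n A k := by
            calc PFsum n A C (fun l => k (γ l)) * PFden n A k
                = PFsum n A C (fun l => k (γ l)) * PFden n A (fun l => k (γ l)) := by rw [e4]
              _ = MvPolynomial.eval (fun l => k (γ l)) P := e2.symm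
              _ = ((Equiv.Perm.sign γ : ℤ) : ℚ) * MvPolynomial.eval k P := e3
              _ = (((Equiv.Perm.sign γ : ℤ) : ℚ) * PFsum n A C k) * PFden n A k := by
                  rw [e1]; ring
          exact mul_right_cancel₀ hd h6
        simp only [sub_div, Finset.sum_sub_distrib, mul_div_assoc, ← Finset.mul_sum]
        rw [← e5, ← PFsum_def n A C k, key]
        ring
      have hDzero := multi_unique n A p _ hvan
      have hmem_s : ∀ l, s l ∈ Finset.Icc 1 A :=
        fun l => Finset.mem_Icc.2 ⟨(hbox l).1, (hbox l).2.1⟩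
      have hmem_j : ∀ l, j l ∈ Finset.range (n + 1) :=
        fun l => Finset.mem_range.2 (by have := (hbox l).2.2; omega)
      have hD0 : C (s ∘ γ) (j ∘ γ) - ((Equiv.Perm.sign γ : ℤ) : ℚ) * C s j = 0 :=
        hDzero s j hmem_s hmem_j
      linarith
  · rintro ⟨hCrefl, hCperm⟩
    have boxify : ∀ s' j' : Fin p → ℕ, (∀ l, s' l ∈ Finset.Icc 1 A) →
        (∀ l, j' l ∈ Finset.range (n + 1)) → (∀ l, 1 ≤ s' l ∧ s' l ≤ A ∧ j' l ≤ n) := by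
      intro s' j' h1 h2 l
      have := Finset.mem_Icc.1 (h1 l)
      have := Finset.mem_range.1 (h2 l)
      omega
    constructor
    · -- reflection of P
      intro i x
      set g : Fin p → MvPolynomial (Fin p) ℚ :=
        Function.update (MvPolynomial.X : Fin p → MvPolynomial (Fin p) ℚ) i
          (- MvPolynomial.X i - MvPolynomial.C (n : ℚ)) with hgdef
      set Q : MvPolynomial (Fin p) ℚ :=
        MvPolynomial.aeval g P - MvPolynomial.C ((-1 : ℚ) ^ (A * (n + 1) + 1)) * P with hQdef
      have hevalQ : ∀ y : Fin p → ℚ, MvPolynomial.eval y Q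
          = MvPolynomial.eval (Function.update y i (-y i - n)) P
            - (-1 : ℚ) ^ (A * (n + 1) + 1) * MvPolynomial.eval y P := by
        intro y
        rw [hQdef, map_sub, map_mul, MvPolynomial.eval_C, eval_aeval_comp]
        have harg : (fun l => MvPolynomial.eval y (g l)) = Function.update y i (-y i - n) := by
          funext l
          rcases eq_or_ne l i with rfl | hl
          · rw [hgdef]
            simp
          · rw [hgdef]
            rw [Function.update_of_ne hl, Function.update_of_ne hl]
            simp
        rw [harg]
      have hvanish : ∀ k : Fin p → ℚ, (∀ l, ∀ t : ℕ, t ≤ n → k l + t ≠ 0) →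
          MvPolynomial.eval k Q = 0 := by
        intro k hk
        rw [hevalQ]
        have hk' := valid_update n k i hk
        have e1 := hvalidP k hk
        have e2 := hvalidP _ hk'
        have e4 := PFden_refl n A k i
        have e5 := SS_refl n A C k i
        have key : PFsum n A C (Function.update k i (-k i - n)) = - PFsum n A C k := by
          rw [e5]
          have step : ∀ s' ∈ Fintype.piFinset (fun _ : Fin p => Finset.Icc 1 A),
              ∀ j' ∈ Fintype.piFinset (fun _ : Fin p => Finset.range (n + 1)),
              ((-1 : ℚ) ^ s' i * C s' (Function.update j' i (n - j' i)))
                  / ∏ l, (k l + (j' l : ℚ)) ^ s' l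
                = - (C s' j' / ∏ l, (k l + (j' l : ℚ)) ^ s' l) := by
            intro s' hs' j' hj'
            simp only [Fintype.mem_piFinset] at hs' hj'
            rw [hCrefl s' j' (boxify s' j' hs' hj') i]
            rw [neg_one_pow_mul_succ (s' i) (C s' j'), neg_div]
          rw [Finset.sum_congr rfl (fun s' hs' => Finset.sum_congr rfl (step s' hs'))]
          rw [PFsum_def]
          simp [Finset.sum_neg_distrib]
        rw [e2, key, e4, e1]
        ring
      have hfin := mv_vanish n p Q hvanish x
      rw [hevalQ x] at hfin
      linarith
    · -- permutation of P
      intro γ x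
      set Q : MvPolynomial (Fin p) ℚ :=
        MvPolynomial.rename γ P
          - MvPolynomial.C (((Equiv.Perm.sign γ : ℤ) : ℚ)) * P with hQdef
      have hevalQ : ∀ y : Fin p → ℚ, MvPolynomial.eval y Q
          = MvPolynomial.eval (fun l => y (γ l)) P
            - ((Equiv.Perm.sign γ : ℤ) : ℚ) * MvPolynomial.eval y P := by
        intro y
        rw [hQdef, map_sub, map_mul, MvPolynomial.eval_C, MvPolynomial.eval_rename]
        rfl
      have hvanish : ∀ k : Fin p → ℚ, (∀ l, ∀ t : ℕ, t ≤ n → k l + t ≠ 0) →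
          MvPolynomial.eval k Q = 0 := by
        intro k hk
        rw [hevalQ]
        have hk' : ∀ l, ∀ t : ℕ, t ≤ n → k (γ l) + (t : ℚ) ≠ 0 := fun l t ht => hk (γ l) t ht
        have e1 := hvalidP k hk
        have e2 := hvalidP (fun l => k (γ l)) hk'
        have e4 := PFden_perm n A k γ
        have e5 := SS_perm n A C k γ
        have key : PFsum n A C (fun l => k (γ l))
            = ((Equiv.Perm.sign γ : ℤ) : ℚ) * PFsum n A C k := by
          rw [e5]
          have step : ∀ s' ∈ Fintype.piFinset (fun _ : Fin p => Finset.Icc 1 A),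
              ∀ j' ∈ Fintype.piFinset (fun _ : Fin p => Finset.range (n + 1)),
              C (s' ∘ γ) (j' ∘ γ) / ∏ l, (k l + (j' l : ℚ)) ^ s' l
                = ((Equiv.Perm.sign γ : ℤ) : ℚ) * (C s' j' / ∏ l, (k l + (j' l : ℚ)) ^ s' l) := by
            intro s' hs' j' hj'
            simp only [Fintype.mem_piFinset] at hs' hj'
            rw [hCperm s' j' (boxify s' j' hs' hj') γ]
            ring
          rw [Finset.sum_congr rfl (fun s' hs' => Finset.sum_congr rfl (step s' hs'))]
          rw [PFsum_def]
          simp [Finset.mul_sum]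
        rw [e2, key, e4, e1]
        ring
      have hfin := mv_vanish n p Q hvanish x
      rw [hevalQ x] at hfin
      linarith
end

section
/- Signature identity: let p ≥ 2, σ ∈ S_p with σ⁻¹(1) =: t ≤ p−1, set ϑ = σ(t+1), let φ: {1,…,p−2} → {1,…,p}∖{t, t+1} and ψ: {1,…,p−2} → {2,…,p}∖{ϑ} be the strictly increasing bijections, and define γ = ψ⁻¹ ∘ σ ∘ φ ∈ S_{p−2} (using the restriction of σ). Then sgn(σ) = (−1)^ϑ · sgn(γ). -/
/-!
Deleting a point `a` from the domain of `σ ∈ S_{n+1}` and its image `b` from the codomain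
multiplies the sign by `(-1)^(a+b)`: composing with the cycles `(0 1 … a)` and `(0 1 … b)`
turns `σ` into a permutation fixing `0` whose restriction is the induced permutation of `S_n`.
Deleting `t ↦ 0` and then `t+1 ↦ ϑ` (where the latter has become `t ↦ ϑ - 1`) gives the factor
`(-1)^t · (-1)^(t+ϑ-1) = (-1)^(ϑ+1)`.
-/

namespace Equiv.Perm

theorem exists_apply_succAbove_eq {n : ℕ} (σ : Perm (Fin (n + 1))) (a : Fin (n + 1)) :
    ∃ γ : Perm (Fin n), ∀ j, σ (a.succAbove j) = (σ a).succAbove (γ j) := by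
  let γ : Perm (Fin n) := (finSuccAboveEquiv a).trans <|
    (σ.subtypeEquiv (p := (· ≠ a)) (q := (· ≠ σ a)) fun _ ↦ σ.injective.ne_iff.symm).trans
      (finSuccAboveEquiv (σ a)).symm
  refine ⟨γ, fun j ↦ ?_⟩
  have := congrArg Subtype.val ((finSuccAboveEquiv (σ a)).apply_symm_apply
    ⟨σ (a.succAbove j), σ.injective.ne (a.succAbove_ne j)⟩)
  rw [finSuccAboveEquiv_apply] at this
  exact this.symm

theorem sign_eq_of_apply_succAbove {n : ℕ} {σ : Perm (Fin (n + 1))} {γ : Perm (Fin n)}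
    {a b : Fin (n + 1)} (h : ∀ j, σ (a.succAbove j) = b.succAbove (γ j)) :
    sign σ = (-1) ^ ((a : ℕ) + b) * sign γ := by
  have hab : σ a = b := by
    obtain hb | ⟨k, hk⟩ := b.eq_self_or_eq_succAbove (σ a)
    · exact hb
    · refine absurd (σ.injective ?_) (a.succAbove_ne (γ.symm k))
      rw [h, apply_symm_apply, hk]
  have hconj : b.cycleRange * σ * a.cycleRange.symm = decomposeFin.symm (0, γ) := by
    ext j
    cases j using Fin.cases <;> simp [hab, h]
  have hsign := congrArg sign hconj
  simp only [map_mul, Fin.sign_cycleRange, sign_symm, decomposeFin.symm_sign, ↓reduceIte,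
    one_mul] at hsign
  rw [← hsign, mul_right_comm, mul_comm ((-1) ^ (b : ℕ)), ← pow_add, ← mul_assoc,
    Int.units_mul_self, one_mul]

end Equiv.Perm

theorem Function.Injective.range_comp_succAbove {α : Type*} {n : ℕ} {f : Fin (n + 1) → α}
    (hf : Function.Injective f) (a : Fin (n + 1)) :
    Set.range (f ∘ a.succAbove) = Set.range f \ {f a} := by
  rw [Set.range_comp, Fin.range_succAbove, Set.image_compl_eq_range_sdiff_image hf,
    Set.image_singleton]

namespace Fin

variable {n : ℕ}

theorem eq_succAbove_comp_succAbove_of_strictMono {φ : Fin n → Fin (n + 2)} (hφ : StrictMono φ)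
    {t : Fin (n + 1)} (hrange : Set.range φ = {t.castSucc, t.succ}ᶜ) :
    φ = t.castSucc.succAbove ∘ t.succAbove := by
  refine (hφ.range_inj ((strictMono_succAbove _).comp (strictMono_succAbove _))).1 ?_
  rw [hrange, succAbove_right_injective.range_comp_succAbove, range_succAbove,
    succAbove_castSucc_self]
  ext
  simp

theorem eq_succ_comp_succAbove_of_strictMono {ψ : Fin n → Fin (n + 2)} (hψ : StrictMono ψ)
    {ϑ : Fin (n + 1)} (hrange : Set.range ψ = {0, ϑ.succ}ᶜ) :
    ψ = succ ∘ ϑ.succAbove := by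
  refine (hψ.range_inj (strictMono_succ.comp (strictMono_succAbove _))).1 ?_
  rw [hrange, (succ_injective _).range_comp_succAbove, range_succ]
  ext
  simp

end Fin

/-- Signature identity: let `σ ∈ S_p` (on `Fin p`, 0-indexed) with `σ t = 0` and
`t + 1 < p`, set `ϑ = σ (t+1)`, let `φ : Fin (p−2) → Fin p` be the strictly
increasing enumeration of the complement of `{t, t+1}`, `ψ` the strictly
increasing enumeration of `{1,…,p−1} ∖ {ϑ}`, and let `γ ∈ S_{p−2}` satisfy
`σ ∘ φ = ψ ∘ γ`. Then `sgn σ = (−1)^{ϑ+1} sgn γ` (here `ϑ+1` is the 1-indexed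
value of `ϑ`). -/
theorem signature_identity (p : ℕ) (hp : 2 ≤ p) (σ : Equiv.Perm (Fin p))
    (t t' : Fin p) (ht : σ t = ⟨0, by omega⟩) (htlt : (t : ℕ) + 1 < p)
    (ht' : (t' : ℕ) = (t : ℕ) + 1)
    (φ ψ : Fin (p - 2) → Fin p)
    (hφmono : StrictMono φ) (hψmono : StrictMono ψ)
    (hφrange : ∀ x : Fin p, (∃ i, φ i = x) ↔ x ≠ t ∧ x ≠ t')
    (hψrange : ∀ x : Fin p, (∃ i, ψ i = x) ↔ (x : ℕ) ≠ 0 ∧ x ≠ σ t')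
    (γ : Equiv.Perm (Fin (p - 2))) (hγ : ∀ i, σ (φ i) = ψ (γ i)) :
    (Equiv.Perm.sign σ : ℤ) =
      (-1) ^ (((σ t' : Fin p) : ℕ) + 1) * (Equiv.Perm.sign γ : ℤ) := by
  obtain ⟨n, rfl⟩ : ∃ n, p = n + 2 := ⟨p - 2, by omega⟩
  obtain ⟨t, rfl⟩ : ∃ s : Fin (n + 1), t = s.castSucc := ⟨⟨t, by omega⟩, rfl⟩
  obtain rfl : t' = t.succ := Fin.ext ht'
  obtain ⟨γ₁, hγ₁⟩ := σ.exists_apply_succAbove_eq t.castSucc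
  rw [ht, Fin.zero_eta] at hγ₁
  obtain ⟨γ₂, hγ₂⟩ := γ₁.exists_apply_succAbove_eq t
  have hϑ : σ t.succ = (γ₁ t).succ := by
    rw [← Fin.succAbove_castSucc_self, hγ₁, Fin.succAbove_zero]
  have hφ : φ = t.castSucc.succAbove ∘ t.succAbove :=
    Fin.eq_succAbove_comp_succAbove_of_strictMono hφmono <| by ext x; simpa using hφrange x
  have hψ : ψ = Fin.succ ∘ (γ₁ t).succAbove :=
    Fin.eq_succ_comp_succAbove_of_strictMono hψmono <| by
      ext x; simpa [hϑ, Fin.val_eq_zero_iff] using hψrange x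
  have hγ_eq : γ = γ₂ :=
    Equiv.ext fun i ↦ hψmono.injective <| by
      rw [← hγ, hφ, hψ]
      simp [hγ₁, hγ₂]
  have hsign : Equiv.Perm.sign σ = (-1) ^ (γ₁ t : ℕ) * Equiv.Perm.sign γ₂ := by
    rw [Equiv.Perm.sign_eq_of_apply_succAbove hγ₁, Equiv.Perm.sign_eq_of_apply_succAbove hγ₂,
      Fin.val_zero, add_zero, Fin.val_castSucc, pow_add, ← mul_assoc, ← mul_assoc,
      Int.units_mul_self, one_mul]
  rw [hsign, hϑ, hγ_eq, Fin.val_succ]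
  push_cast
  ring
end
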